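/- arXiv:2506.12559 — 9 statements merged into one kernel-verified Lean document; each statement's English description precedes it below -/
import Mathlib

section
/- Let p be an odd prime, α a primitive root modulo p, and c an integer with 0 ≤ c ≤ p-2. The permutation f(j) = α^(j-1+c) mod p on {1,...,p-1} satisfies the Costas property: for all (u,v) ≠ (0,0), the number of indices i with both i and i+u in {1,...,p-1} and f(i+u) = f(i) + v is at most 1. -/
/-- Exponential Welch Costas arrays satisfy the Costas property. -/
theorem stmt_1 (p α c : ℕ) (hp : p.Prime) (hodd : Odd p) (hc : c ≤ p - 2)
    (hα : orderOf (α : ZMod p) = p - 1) (u v : ℤ) (huv : (u, v) ≠ (0, 0)) :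
    ((Finset.Icc (1 : ℤ) ((p : ℤ) - 1)).filter (fun i =>
        i + u ∈ Finset.Icc (1 : ℤ) ((p : ℤ) - 1) ∧
        ((α ^ (i + u - 1 + (c : ℤ)).toNat % p : ℕ) : ℤ) =
          ((α ^ (i - 1 + (c : ℤ)).toNat % p : ℕ) : ℤ) + v)).card ≤ 1 := by
  classical
  haveI := Fact.mk hp
  have hpne2 : p ≠ 2 := by rintro rfl; simp [Nat.odd_iff] at hodd
  have hp2 : 2 < p := lt_of_le_of_ne hp.two_le (Ne.symm hpne2)
  set A : ZMod p := (α : ZMod p) with hAdef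
  have hA0 : A ≠ 0 := by
    intro h
    have h1 := pow_orderOf_eq_one A
    rw [hα, h, zero_pow (by omega : p - 1 ≠ 0)] at h1
    exact zero_ne_one h1
  -- the unit
  set U : (ZMod p)ˣ := Units.mk0 A hA0 with hUdef
  have hUord : orderOf U = p - 1 := by
    rw [← hα]
    exact (orderOf_units (y := U)).symm
  have hdvd : ∀ n : ℤ, A ^ n = 1 → ((p : ℤ) - 1) ∣ n := by
    intro n h
    have hU : U ^ n = 1 := by
      ext
      rw [Units.val_zpow_eq_zpow_val]
      simpa [hUdef] using h
    have := (orderOf_dvd_iff_zpow_eq_one (x := U) (i := n)).mpr hU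
    rw [hUord] at this
    have hcast : ((p - 1 : ℕ) : ℤ) = (p : ℤ) - 1 := by
      push_cast [Nat.cast_sub hp.one_le]; ring
    rwa [hcast] at this
  have cast_eq : ∀ n : ℤ, 0 ≤ n → ((α ^ n.toNat % p : ℕ) : ZMod p) = A ^ n := by
    intro n hn
    rw [ZMod.natCast_mod, Nat.cast_pow, ← hAdef, ← zpow_natCast, Int.toNat_of_nonneg hn]
  rw [Finset.card_le_one]
  intro i hi j hj
  simp only [Finset.mem_filter, Finset.mem_Icc] at hi hj
  obtain ⟨⟨hi1, hi2⟩, ⟨hiu1, hiu2⟩, Ei⟩ := hi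
  obtain ⟨⟨hj1, hj2⟩, ⟨hju1, hju2⟩, Ej⟩ := hj
  -- convert integer equations to ZMod p equations
  have key : ∀ x : ℤ, 1 ≤ x → 1 ≤ x + u →
      ((α ^ (x + u - 1 + (c : ℤ)).toNat % p : ℕ) : ℤ) =
          ((α ^ (x - 1 + (c : ℤ)).toNat % p : ℕ) : ℤ) + v →
      A ^ (x - 1 + (c : ℤ)) * (A ^ u - 1) = (v : ZMod p) := by
    intro x hx hxu E
    have hc0 : (0 : ℤ) ≤ (c : ℤ) := Int.natCast_nonneg c
    have h0 : (0 : ℤ) ≤ x - 1 + (c : ℤ) := by omega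
    have h0' : (0 : ℤ) ≤ x + u - 1 + (c : ℤ) := by
      omega
    have E2 := congrArg (fun t : ℤ => (t : ZMod p)) E
    simp only [Int.cast_add, Int.cast_natCast] at E2
    rw [cast_eq _ h0', cast_eq _ h0] at E2
    have hsplit : x + u - 1 + (c : ℤ) = (x - 1 + (c : ℤ)) + u := by ring
    rw [hsplit, zpow_add₀ hA0] at E2
    rw [mul_sub, mul_one, E2]
    ring
  by_cases hu : u = 0
  · -- then v = 0, contradicting huv
    subst hu
    simp only [add_zero] at Ei
    have hv : v = 0 := by omega
    exact absurd (by simp [hv]) huv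
  · have hAu : A ^ u ≠ 1 := by
      intro h1
      have hd := hdvd u h1
      have habs : (p : ℤ) - 1 ≤ |u| := Int.le_of_dvd (abs_pos.mpr hu) ((dvd_abs _ _).mpr hd)
      have hb1 : |u| ≤ (p : ℤ) - 2 := by
        rw [abs_le]; omega
      have : (2 : ℤ) < p := by exact_mod_cast hp2
      linarith
    have Ei' := key i hi1 hiu1 Ei
    have Ej' := key j hj1 hju1 Ej
    have hcancel : A ^ (i - 1 + (c : ℤ)) = A ^ (j - 1 + (c : ℤ)) :=
      mul_right_cancel₀ (sub_ne_zero.mpr hAu) (Ei'.trans Ej'.symm)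
    have hij : A ^ (i - j) = 1 := by
      rw [show i - j = (i - 1 + (c : ℤ)) - (j - 1 + (c : ℤ)) by ring, zpow_sub₀ hA0,
        hcancel, div_self (zpow_ne_zero _ hA0)]
    have hd := hdvd _ hij
    by_contra hne
    have habs : (p : ℤ) - 1 ≤ |i - j| :=
      Int.le_of_dvd (abs_pos.mpr (sub_ne_zero.mpr hne)) ((dvd_abs _ _).mpr hd)
    have hb1 : |i - j| ≤ (p : ℤ) - 2 := by
      rw [abs_le]; omega
    have : (2 : ℤ) < p := by exact_mod_cast hp2
    linarith
end

section
/- Let p be prime, and let f(x) = x^n + a x^s + b be a trinomial over F_p with a, b nonzero, n > s > 0. Then the number of roots of f in F_p is at most δ·⌊1/2 + √((p-1)/δ)⌋, where δ = gcd(n, s, p-1). -/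
open Finset Polynomial

lemma KO_card_unity (p : ℕ) [Fact p.Prime] (d : ℕ) (hd0 : 0 < d) (hd : d ∣ p - 1) :
    (Finset.univ.filter fun ζ : ZMod p => ζ ^ d = 1).card = d := by
  obtain ⟨g, hg⟩ := IsCyclic.exists_ofOrder_eq_natCard (α := (ZMod p)ˣ)
  have hcard : Nat.card (ZMod p)ˣ = p - 1 := by
    rw [Nat.card_eq_fintype_card, ZMod.card_units_eq_totient,
      Nat.totient_prime (Fact.out : p.Prime)]
  have hgo : orderOf g = p - 1 := hg.trans hcard
  have hp1 : 0 < p - 1 := Nat.sub_pos_of_lt (Fact.out : p.Prime).one_lt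
  have hdvd : (p - 1) / d ∣ p - 1 := Nat.div_dvd_of_dvd hd
  have hord : orderOf (g ^ ((p - 1) / d)) = d := by
    rw [orderOf_pow, hgo, Nat.gcd_eq_right hdvd, Nat.div_div_self hd hp1.ne']
  have hprim : IsPrimitiveRoot ((g ^ ((p - 1) / d) : (ZMod p)ˣ) : ZMod p) d := by
    have h := IsPrimitiveRoot.orderOf (g ^ ((p - 1) / d))
    rw [hord] at h
    exact IsPrimitiveRoot.coe_units_iff.mpr h
  have heq : (Finset.univ.filter fun ζ : ZMod p => ζ ^ d = 1) = nthRootsFinset d (1 : ZMod p) := by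
    ext x; simp [Polynomial.mem_nthRootsFinset hd0]
  rw [heq, hprim.card_nthRootsFinset]

/-- Kelley–Owen bound on the number of roots of a trinomial over F_p. -/
theorem stmt_3 (p : ℕ) [Fact p.Prime] (n s : ℕ) (a b : ZMod p)
    (ha : a ≠ 0) (hb : b ≠ 0) (hs : 0 < s) (hns : s < n) :
    ((Finset.univ.filter (fun x : ZMod p => x ^ n + a * x ^ s + b = 0)).card : ℝ) ≤
      (Nat.gcd n (Nat.gcd s (p - 1)) : ℝ) *
        (⌊(1 / 2 : ℝ) + Real.sqrt (((p : ℝ) - 1) / (Nat.gcd n (Nat.gcd s (p - 1)) : ℝ))⌋ : ℝ) := by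
  classical
  have hp : p.Prime := Fact.out
  set δ := Nat.gcd n (Nat.gcd s (p - 1)) with hδdef
  set T := Finset.univ.filter (fun x : ZMod p => x ^ n + a * x ^ s + b = 0) with hTdef
  have hδn : δ ∣ n := Nat.gcd_dvd_left _ _
  have hδs : δ ∣ s := (Nat.gcd_dvd_right _ _).trans (Nat.gcd_dvd_left _ _)
  have hδp : δ ∣ p - 1 := (Nat.gcd_dvd_right _ _).trans (Nat.gcd_dvd_right _ _)
  have hδ0 : 0 < δ := Nat.gcd_pos_of_pos_left _ (hs.trans hns)
  have hp1 : 0 < p - 1 := Nat.sub_pos_of_lt hp.one_lt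
  set t := (p - 1) / δ with htdef
  have ht0 : 0 < t := Nat.div_pos (Nat.le_of_dvd hp1 hδp) hδ0
  have htdvd : t ∣ p - 1 := Nat.div_dvd_of_dvd hδp
  have hδt : δ * t = p - 1 := Nat.mul_div_cancel' hδp
  have hmem : ∀ x : ZMod p, x ∈ T ↔ x ^ n + a * x ^ s + b = 0 := by
    intro x; simp [hTdef]
  have hroot_ne : ∀ x ∈ T, x ≠ 0 := by
    intro x hx hx0
    rw [hmem, hx0, zero_pow (by omega), zero_pow (by omega), mul_zero, add_zero, zero_add] at hx
    exact hb hx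
  have hpow1 : ∀ v : ZMod p, v ≠ 0 → v ^ n = 1 → v ^ s = 1 → v ^ δ = 1 := by
    intro v hv hn1 hs1
    have h1 : orderOf v ∣ n := orderOf_dvd_of_pow_eq_one hn1
    have h2 : orderOf v ∣ s := orderOf_dvd_of_pow_eq_one hs1
    have h3 : orderOf v ∣ p - 1 :=
      orderOf_dvd_of_pow_eq_one (ZMod.pow_card_sub_one_eq_one hv)
    exact orderOf_dvd_iff_pow_eq_one.mp (Nat.dvd_gcd h1 (Nat.dvd_gcd h2 h3))
  have hδpow : ∀ (v : ZMod p) (m : ℕ), δ ∣ m → v ^ δ = 1 → v ^ m = 1 := by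
    intro v m hdm h1
    obtain ⟨k, rfl⟩ := hdm
    rw [pow_mul, h1, one_pow]
  have hinv : ∀ x ∈ T, ∀ ζ : ZMod p, ζ ^ δ = 1 → ζ * x ∈ T := by
    intro x hx ζ hζ
    rw [hmem] at hx ⊢
    rw [mul_pow, mul_pow, hδpow ζ n hδn hζ, hδpow ζ s hδs hζ, one_mul, one_mul]
    exact hx
  have hB : ∀ u y : ZMod p, y ∈ T → u * y ∈ T →
      y ^ n * (u ^ n - 1) + a * (y ^ s * (u ^ s - 1)) = 0 := by
    intro u y hy huy
    rw [hmem] at hy huy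
    linear_combination huy - hy
  -- the key Sidon property
  have hkey : ∀ x y z w : ZMod p, x ∈ T → y ∈ T → z ∈ T → w ∈ T →
      x ^ δ * w ^ δ = y ^ δ * z ^ δ → x ^ δ ≠ y ^ δ → x ^ δ = z ^ δ ∧ y ^ δ = w ^ δ := by
    intro x y z w hx hy hz hw hrel hne
    have hx0 := hroot_ne x hx; have hy0 := hroot_ne y hy
    have hz0 := hroot_ne z hz; have hw0 := hroot_ne w hw
    set u := x * y⁻¹ with hu
    have hu0 : u ≠ 0 := mul_ne_zero hx0 (inv_ne_zero hy0)
    have hx_eq : x = u * y := by rw [hu, mul_assoc, inv_mul_cancel₀ hy0, mul_one]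
    set ζ := x * w * (y * z)⁻¹ with hζ
    have hζδ : ζ ^ δ = 1 := by
      rw [hζ, mul_pow, mul_pow, hrel, inv_pow, ← mul_pow]
      exact mul_inv_cancel₀ (pow_ne_zero δ (mul_ne_zero hy0 hz0))
    have hz' : ζ * z = u * w := by
      rw [hζ, hu]
      field_simp
    have huw : u * w ∈ T := hz' ▸ hinv z hz ζ hζδ
    have huy : u * y ∈ T := hx_eq ▸ hx
    have hBy := hB u y hy huy
    have hBw := hB u w hw huw
    have huδ : u ^ δ ≠ 1 := by
      intro h
      exact hne (by rw [hx_eq, mul_pow, h, one_mul])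
    by_cases hus : u ^ s = 1
    · exfalso
      rw [hus, sub_self, mul_zero, mul_zero, add_zero] at hBy
      have hun : u ^ n = 1 := by
        rcases mul_eq_zero.mp hBy with h | h
        · exact absurd h (pow_ne_zero n hy0)
        · exact sub_eq_zero.mp h
      exact huδ (hpow1 u hu0 hun hus)
    · have hun : u ^ n ≠ 1 := by
        intro h
        rw [h, sub_self, mul_zero, zero_add] at hBy
        have h1 := (mul_eq_zero.mp hBy).resolve_left ha
        have h2 := (mul_eq_zero.mp h1).resolve_left (pow_ne_zero s hy0)
        exact hus (sub_eq_zero.mp h2)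
      have h3 : (y ^ n * w ^ s) * (u ^ n - 1) = (y ^ s * w ^ n) * (u ^ n - 1) := by
        linear_combination w ^ s * hBy - y ^ s * hBw
      have h4 : y ^ n * w ^ s = y ^ s * w ^ n :=
        mul_right_cancel₀ (sub_ne_zero.mpr hun) h3
      have hyn : y ^ n = y ^ (n - s) * y ^ s := by
        rw [← pow_add, Nat.sub_add_cancel hns.le]
      have hwn : w ^ n = w ^ (n - s) * w ^ s := by
        rw [← pow_add, Nat.sub_add_cancel hns.le]
      have h5 : y ^ (n - s) * (y ^ s * w ^ s) = w ^ (n - s) * (y ^ s * w ^ s) := by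
        linear_combination h4 - w ^ s * hyn + y ^ s * hwn
      have h6 : y ^ (n - s) = w ^ (n - s) :=
        mul_right_cancel₀ (mul_ne_zero (pow_ne_zero s hy0) (pow_ne_zero s hw0)) h5
      have hyb : y ^ s * (y ^ (n - s) + a) = -b := by
        rw [hmem] at hy
        linear_combination hy - hyn
      have hwb : w ^ s * (w ^ (n - s) + a) = -b := by
        rw [hmem] at hw
        linear_combination hw - hwn
      have hca : y ^ (n - s) + a ≠ 0 := by
        intro h
        rw [h, mul_zero] at hyb
        exact hb (neg_eq_zero.mp hyb.symm)
      have hss : y ^ s = w ^ s := by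
        rw [← h6] at hwb
        have := hyb.trans hwb.symm
        exact mul_right_cancel₀ hca this
      have hnn : y ^ n = w ^ n := by rw [hyn, hwn, h6, hss]
      have hvδ : (y * w⁻¹) ^ δ = 1 := by
        apply hpow1 _ (mul_ne_zero hy0 (inv_ne_zero hw0))
        · rw [mul_pow, inv_pow, hnn, mul_inv_cancel₀ (pow_ne_zero n hw0)]
        · rw [mul_pow, inv_pow, hss, mul_inv_cancel₀ (pow_ne_zero s hw0)]
      have hywδ : y ^ δ = w ^ δ := by
        rw [mul_pow, inv_pow] at hvδ
        field_simp at hvδ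
        exact hvδ
      refine ⟨?_, hywδ⟩
      have hzδ : z ^ δ = u ^ δ * w ^ δ := by
        calc z ^ δ = ζ ^ δ * z ^ δ := by rw [hζδ, one_mul]
        _ = (ζ * z) ^ δ := (mul_pow _ _ _).symm
        _ = (u * w) ^ δ := by rw [hz']
        _ = u ^ δ * w ^ δ := mul_pow _ _ _
      rw [hzδ, hx_eq, mul_pow, hywδ]
  -- counting
  set P := T.image (fun x => x ^ δ) with hPdef
  have hfiber : ∀ α ∈ P, (T.filter fun y => y ^ δ = α).card = δ := by
    intro α hα
    obtain ⟨x, hxT, hxα⟩ := Finset.mem_image.mp hα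
    have hx0 := hroot_ne x hxT
    have : T.filter (fun y => y ^ δ = α) =
        (Finset.univ.filter fun ζ : ZMod p => ζ ^ δ = 1).image (fun ζ => ζ * x) := by
      ext y
      simp only [Finset.mem_filter, Finset.mem_image, Finset.mem_univ, true_and]
      constructor
      · rintro ⟨hyT, hyα⟩
        refine ⟨y * x⁻¹, ?_, by field_simp⟩
        rw [mul_pow, inv_pow, hyα, ← hxα, mul_inv_cancel₀ (pow_ne_zero δ hx0)]
      · rintro ⟨ζ, hζ, rfl⟩
        refine ⟨hinv x hxT ζ hζ, ?_⟩
        rw [mul_pow, hζ, one_mul, hxα]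
    rw [this, Finset.card_image_of_injective _ (mul_left_injective₀ hx0),
      KO_card_unity p δ hδ0 hδp]
  have hcardT : T.card = δ * P.card := by
    rw [Finset.card_eq_sum_card_image (fun x => x ^ δ) T,
      Finset.sum_congr rfl hfiber, Finset.sum_const, smul_eq_mul, mul_comm]
  have hPne0 : ∀ α ∈ P, α ≠ 0 := by
    rintro α hα
    obtain ⟨x, hxT, rfl⟩ := Finset.mem_image.mp hα
    exact pow_ne_zero δ (hroot_ne x hxT)
  have hPt1 : ∀ α ∈ P, α ^ t = 1 := by
    rintro α hα
    obtain ⟨x, hxT, rfl⟩ := Finset.mem_image.mp hα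
    rw [← pow_mul, hδt]
    exact ZMod.pow_card_sub_one_eq_one (hroot_ne x hxT)
  -- Sidon counting
  have hcount : P.offDiag.card ≤ t - 1 := by
    have hmaps : ∀ q ∈ P.offDiag, q.1 * q.2⁻¹ ∈
        (Finset.univ.filter fun γ : ZMod p => γ ^ t = 1).erase 1 := by
      rintro ⟨α, β⟩ hq
      obtain ⟨hα, hβ, hne⟩ := Finset.mem_offDiag.mp hq
      refine Finset.mem_erase.mpr ⟨?_, ?_⟩
      · intro h
        have hβ0 := hPne0 β hβ
        apply hne
        have h1 : α = β := by
          have h2 := mul_eq_mul_right_iff.mp (congrArg (· * β) h)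
          field_simp at h
          exact h
        exact h1
      · simp only [Finset.mem_filter, Finset.mem_univ, true_and]
        rw [mul_pow, inv_pow, hPt1 α hα, hPt1 β hβ, inv_one, mul_one]
    have hinj : Set.InjOn (fun q : ZMod p × ZMod p => q.1 * q.2⁻¹) P.offDiag := by
      rintro ⟨α, β⟩ hq ⟨γ, η⟩ hq' hfe
      obtain ⟨hα, hβ, hne⟩ := Finset.mem_offDiag.mp (by exact_mod_cast hq)
      obtain ⟨hγ, hη, hne'⟩ := Finset.mem_offDiag.mp (by exact_mod_cast hq')
      simp only at hfe
      have hβ0 := hPne0 β hβ; have hη0 := hPne0 η hη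
      have hcross : α * η = β * γ := by
        field_simp at hfe
        linear_combination hfe
      obtain ⟨x, hxT, rfl⟩ := Finset.mem_image.mp hα
      obtain ⟨y, hyT, rfl⟩ := Finset.mem_image.mp hβ
      obtain ⟨z, hzT, rfl⟩ := Finset.mem_image.mp hγ
      obtain ⟨w, hwT, rfl⟩ := Finset.mem_image.mp hη
      obtain ⟨h1, h2⟩ := hkey x y z w hxT hyT hzT hwT hcross hne
      simp [h1, h2]
    calc P.offDiag.card ≤ ((Finset.univ.filter fun γ : ZMod p => γ ^ t = 1).erase 1).card :=
          Finset.card_le_card_of_injOn _ hmaps hinj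
      _ = t - 1 := by
          rw [Finset.card_erase_of_mem, KO_card_unity p t ht0 htdvd]
          simp
  have hmm : P.card * P.card - P.card ≤ t - 1 := by
    rw [← Finset.offDiag_card]; exact hcount
  have hmR : (P.card : ℝ) * P.card - P.card ≤ (t : ℝ) - 1 := by
    have h1 : P.card ≤ P.card * P.card := by nlinarith
    have h2 := (Nat.cast_le (α := ℝ)).mpr hmm
    rwa [Nat.cast_sub h1, Nat.cast_sub ht0, Nat.cast_mul, Nat.cast_one] at h2
  have htR : ((p : ℝ) - 1) / (δ : ℝ) = (t : ℝ) := by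
    have hc : ((p - 1 : ℕ) : ℝ) = (p : ℝ) - 1 := by
      rw [Nat.cast_sub hp.one_lt.le, Nat.cast_one]
    rw [← hc, ← hδt]
    push_cast
    rw [mul_comm, mul_div_assoc, div_self (by exact_mod_cast hδ0.ne'), mul_one]
  have hfloor : (P.card : ℝ) ≤
      ((⌊(1 / 2 : ℝ) + Real.sqrt (((p : ℝ) - 1) / (δ : ℝ))⌋ : ℤ) : ℝ) := by
    have ht1 : (1 : ℝ) ≤ (t : ℝ) := by exact_mod_cast ht0
    have hsq : ((P.card : ℝ) - 1 / 2) ^ 2 ≤ ((p : ℝ) - 1) / (δ : ℝ) := by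
      rw [htR]; nlinarith [hmR]
    have h2 : (P.card : ℝ) - 1 / 2 ≤ Real.sqrt (((p : ℝ) - 1) / (δ : ℝ)) :=
      calc (P.card : ℝ) - 1 / 2 ≤ |(P.card : ℝ) - 1 / 2| := le_abs_self _
        _ = Real.sqrt (((P.card : ℝ) - 1 / 2) ^ 2) := (Real.sqrt_sq_eq_abs _).symm
        _ ≤ _ := Real.sqrt_le_sqrt hsq
    have h3 : ((P.card : ℤ) : ℝ) ≤ (1 / 2 : ℝ) + Real.sqrt (((p : ℝ) - 1) / (δ : ℝ)) := by
      push_cast; linarith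
    exact_mod_cast Int.cast_le.mpr (Int.le_floor.mpr h3)
  rw [hcardT]
  push_cast
  exact mul_le_mul_of_nonneg_left hfloor (Nat.cast_nonneg δ)
end

section
/- Any Sidon set contained in {1, 2, ..., n} has cardinality strictly less than n^(1/2) + n^(1/4) + 1/2. -/
/-!
Counting in windows (Erdős–Turán, Cilleruelo). For a window length `m`, let `w t` be the number
of elements of `S` in `(t - m, t]`. Every element lies in exactly `m` of the `n + m - 1` windows,
so `∑ w t = |S| m`. An ordered pair `a ≠ b` lying in the window at `t` is determined by
`(t - a, t - b)`, a pair of distinct numbers below `m`, because in a Sidon set the difference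
`a - b` determines `a` and `b`; hence `∑ w t (w t - 1) ≤ m (m - 1)`. Cauchy–Schwarz then gives
`|S|² m ≤ (n + m - 1)(m - 1 + |S|)`, and `m = ⌈n^(3/4)⌉` yields the bound.
-/

open Finset

def IsSidon (S : Finset ℕ) : Prop :=
  ∀ a ∈ S, ∀ b ∈ S, ∀ c ∈ S, ∀ d ∈ S,
    a + b = c + d → (a = c ∧ b = d) ∨ (a = d ∧ b = c)

def window (S : Finset ℕ) (m t : ℕ) : Finset ℕ :=
  S.filter fun s => s ≤ t ∧ t < s + m

lemma sum_card_window {S : Finset ℕ} {n : ℕ} (hS : S ⊆ Icc 1 n) (m : ℕ) :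
    ∑ t ∈ Ico 1 (n + m), #(window S m t) = #S * m := by
  simp only [window, card_filter]
  rw [sum_comm, ← smul_eq_mul, ← sum_const]
  refine sum_congr rfl fun s hs => ?_
  have hs' := mem_Icc.mp (hS hs)
  have hIco : {t ∈ Ico 1 (n + m) | s ≤ t ∧ t < s + m} = Ico s (s + m) := by
    ext t
    simp only [mem_filter, mem_Ico]
    omega
  rw [← card_filter, hIco, Nat.card_Ico, Nat.add_sub_cancel_left]

lemma IsSidon.sum_card_offDiag_window_le {S : Finset ℕ} (hS : IsSidon S) (m : ℕ)
    (T : Finset ℕ) : ∑ t ∈ T, #(window S m t).offDiag ≤ m * (m - 1) := by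
  have hm : #(range m).offDiag = m * (m - 1) := by
    rw [offDiag_card, card_range, Nat.mul_sub_one]
  rw [← card_sigma, ← hm]
  refine card_le_card_of_injOn (fun p => (p.1 - p.2.1, p.1 - p.2.2)) ?_ ?_
  · rintro ⟨t, a, b⟩ h
    simp only [coe_sigma, Set.mem_sigma_iff, mem_coe, mem_offDiag, window, mem_filter] at h
    simp only [coe_offDiag, Set.mem_offDiag, coe_range, Set.mem_Iio]
    omega
  · rintro ⟨t, a, b⟩ h ⟨t', a', b'⟩ h' he
    simp only [coe_sigma, Set.mem_sigma_iff, mem_coe, mem_offDiag, window, mem_filter] at h h'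
    simp only [Prod.mk.injEq] at he
    rcases hS a h.2.1.1 b' h'.2.2.1.1 a' h'.2.1.1 b h.2.2.1.1 (by omega)
      with ⟨rfl, rfl⟩ | ⟨rfl, rfl⟩
    · obtain rfl : t = t' := by omega
      rfl
    · omega

lemma IsSidon.card_sq_mul_le {S : Finset ℕ} (hSidon : IsSidon S) {n m : ℕ} (hS : S ⊆ Icc 1 n)
    (hm : 0 < m) : #S ^ 2 * m ≤ (n + m - 1) * (m - 1 + #S) := by
  have hsq (t : ℕ) : #(window S m t) ^ 2 = #(window S m t).offDiag + #(window S m t) := by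
    rw [offDiag_card, sq, Nat.sub_add_cancel (Nat.le_mul_self _)]
  have h : (#S * m) ^ 2 ≤ (n + m - 1) * (m * (m - 1) + #S * m) :=
    calc (#S * m) ^ 2 = (∑ t ∈ Ico 1 (n + m), #(window S m t)) ^ 2 := by
          rw [sum_card_window hS]
      _ ≤ #(Ico 1 (n + m)) * ∑ t ∈ Ico 1 (n + m), #(window S m t) ^ 2 :=
          sq_sum_le_card_mul_sum_sq
      _ = (n + m - 1) * (∑ t ∈ Ico 1 (n + m), #(window S m t).offDiag + #S * m) := by
          simp only [hsq, sum_add_distrib, sum_card_window hS, Nat.card_Ico]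
      _ ≤ (n + m - 1) * (m * (m - 1) + #S * m) := by
          gcongr
          exact hSidon.sum_card_offDiag_window_le m _
  refine Nat.le_of_mul_le_mul_right ?_ hm
  calc #S ^ 2 * m * m = (#S * m) ^ 2 := by ring
    _ ≤ (n + m - 1) * (m * (m - 1) + #S * m) := h
    _ = (n + m - 1) * (m - 1 + #S) * m := by ring

/- The quadratic `m k² - (x⁴ + m - 1)(m - 1 + k)` is positive at `k = x² + x + 1/2` and
increasing from there on. -/
lemma lt_sq_add_add_half_of_sq_mul_le {x m k : ℝ} (hx : 1 ≤ x) (hm : x ^ 3 ≤ m)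
    (hm' : m < x ^ 3 + 1) (h : k ^ 2 * m ≤ (x ^ 4 + m - 1) * (m - 1 + k)) :
    k < x ^ 2 + x + 1 / 2 := by
  by_contra! hk
  have hx3 : 1 ≤ x ^ 3 := one_le_pow₀ hx
  have hpos :
      0 < m * (x ^ 2 + x + 1 / 2) ^ 2 - (x ^ 4 + m - 1) * (m - 1 + (x ^ 2 + x + 1 / 2)) := by
    obtain ⟨e, rfl⟩ : ∃ e, m = x ^ 3 + e := ⟨m - x ^ 3, by ring⟩
    have he : 0 ≤ e := by linarith
    nlinarith [mul_nonneg he (sq_nonneg x), mul_nonneg he (by linarith : 0 ≤ 1 - e)]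
  have hgrowth : x ^ 4 + m - 1 ≤ m * (k + (x ^ 2 + x + 1 / 2)) := by
    nlinarith [mul_le_mul_of_nonneg_left hk (by linarith : (0:ℝ) ≤ m)]
  nlinarith [mul_nonneg (sub_nonneg.2 hk) (sub_nonneg.2 hgrowth)]

/-- Cilleruelo's bound on the size of a Sidon set in {1,...,n}. -/
theorem stmt_4 (n : ℕ) (hn : 0 < n) (S : Finset ℕ) (hS : S ⊆ Finset.Icc 1 n)
    (hsidon : ∀ a ∈ S, ∀ b ∈ S, ∀ c ∈ S, ∀ d ∈ S,
      a + b = c + d → (a = c ∧ b = d) ∨ (a = d ∧ b = c)) :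
    (S.card : ℝ) < Real.sqrt n + (n : ℝ) ^ ((1 : ℝ) / 4) + 1 / 2 := by
  set x : ℝ := (n : ℝ) ^ ((1 : ℝ) / 4)
  have hx : 1 ≤ x := Real.one_le_rpow (by exact_mod_cast hn) (by norm_num)
  have hx4 : x ^ 4 = n := by
    rw [← Real.rpow_natCast, ← Real.rpow_mul n.cast_nonneg]
    norm_num
  have hsqrt : Real.sqrt n = x ^ 2 := by
    rw [← hx4, show x ^ 4 = (x ^ 2) ^ 2 by ring, Real.sqrt_sq (by positivity)]
  set m : ℕ := ⌈x ^ 3⌉₊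
  have hm : 0 < m := Nat.ceil_pos.mpr (by positivity)
  have hcount : (#S : ℝ) ^ 2 * m ≤ (x ^ 4 + m - 1) * (m - 1 + #S) := by
    have h := IsSidon.card_sq_mul_le hsidon hS hm
    rw [hx4, ← Nat.cast_one, ← Nat.cast_add, ← Nat.cast_sub (by omega), ← Nat.cast_sub hm]
    exact_mod_cast h
  rw [hsqrt]
  exact lt_sq_add_add_half_of_sq_mul_le hx (Nat.le_ceil _)
    (Nat.ceil_lt_add_one (by positivity)) hcount
end

section
/- Let p ≥ 5 be prime and let d₁, d₂ be distinct integers with gcd(d₁, p-1) = gcd(d₂, p-1) = 1. For any nonzero v ∈ F_p, the number of x ∈ F_p* with x^(d₁) + v = x^(d₂) in F_p is at most 1/2 + √(p-1). -/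
lemma aux_pow_eq_one {p : ℕ} [Fact p.Prime] {t : ZMod p} (ht : t ≠ 0)
    {d : ℕ} (hd : Nat.Coprime d (p - 1)) (h : t ^ d = 1) : t = 1 := by
  have h1 : t ^ (p - 1) = 1 := ZMod.pow_card_sub_one_eq_one ht
  have h2 : orderOf t ∣ Nat.gcd d (p - 1) :=
    Nat.dvd_gcd (orderOf_dvd_of_pow_eq_one h) (orderOf_dvd_of_pow_eq_one h1)
  rw [hd] at h2
  exact orderOf_eq_one_iff.mp (Nat.dvd_one.mp h2)

/-- Cross-correlation of two power permutations at shift (0, v), v ≠ 0. -/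
theorem stmt_5 (p : ℕ) [Fact p.Prime] (hp : 5 ≤ p) (d₁ d₂ : ℕ) (hne : d₁ ≠ d₂)
    (h1 : Nat.Coprime d₁ (p - 1)) (h2 : Nat.Coprime d₂ (p - 1)) (v : ZMod p) (hv : v ≠ 0) :
    ((Finset.univ.filter (fun x : ZMod p => x ≠ 0 ∧ x ^ d₁ + v = x ^ d₂)).card : ℝ) ≤
      1 / 2 + Real.sqrt ((p : ℝ) - 1) := by
  set S := Finset.univ.filter (fun x : ZMod p => x ≠ 0 ∧ x ^ d₁ + v = x ^ d₂) with hSdef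
  have hmem : ∀ x : ZMod p, x ∈ S → x ≠ 0 ∧ x ^ d₁ + v = x ^ d₂ := by
    intro x hx
    simpa [hSdef] using hx
  -- key: the number of ordered pairs of distinct solutions is at most p - 2
  have key : S.offDiag.card ≤ p - 2 := by
    have hsub : ({0, 1} : Finset (ZMod p)) ⊆ Finset.univ := Finset.subset_univ _
    have hmaps : ∀ q ∈ S.offDiag,
        q.2 * q.1⁻¹ ∈ (Finset.univ \ ({0, 1} : Finset (ZMod p))) := by
      rintro ⟨x, y⟩ hq
      obtain ⟨hx, hy, hxy⟩ := Finset.mem_offDiag.mp hq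
      obtain ⟨hx0, hxe⟩ := hmem x hx
      obtain ⟨hy0, hye⟩ := hmem y hy
      simp only [Finset.mem_sdiff, Finset.mem_univ, Finset.mem_insert,
        Finset.mem_singleton, true_and]
      push_neg
      constructor
      · exact mul_ne_zero hy0 (inv_ne_zero hx0)
      · intro h
        apply hxy
        field_simp at h
        exact h.symm
    have hinj : ∀ a ∈ S.offDiag, ∀ b ∈ S.offDiag,
        a.2 * a.1⁻¹ = b.2 * b.1⁻¹ → a = b := by
      rintro ⟨x, y⟩ ha ⟨x', y'⟩ hb hab
      obtain ⟨hx, hy, hxy⟩ := Finset.mem_offDiag.mp ha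
      obtain ⟨hx', hy', hxy'⟩ := Finset.mem_offDiag.mp hb
      obtain ⟨hx0, hxe⟩ := hmem x hx
      obtain ⟨hy0, hye⟩ := hmem y hy
      obtain ⟨hx0', hxe'⟩ := hmem x' hx'
      obtain ⟨hy0', hye'⟩ := hmem y' hy'
      simp only at hab ⊢
      set t := y * x⁻¹ with htdef
      have hyt : y = t * x := by rw [htdef, mul_assoc, inv_mul_cancel₀ hx0, mul_one]
      have hyt' : y' = t * x' := by
        rw [hab]; field_simp
      have ht0 : t ≠ 0 := mul_ne_zero hy0 (inv_ne_zero hx0)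
      have ht1 : t ≠ 1 := by
        intro h
        apply hxy
        rw [hyt, h, one_mul]
      have htd2 : t ^ d₂ ≠ 1 := fun h => ht1 (aux_pow_eq_one ht0 h2 h)
      -- the two balance equations
      have hA : x ^ d₂ * (t ^ d₂ - 1) = x ^ d₁ * (t ^ d₁ - 1) := by
        have hy2 := hye
        rw [hyt, mul_pow, mul_pow] at hy2
        linear_combination hxe - hy2
      have hB : x' ^ d₂ * (t ^ d₂ - 1) = x' ^ d₁ * (t ^ d₁ - 1) := by
        have hy2 := hye'
        rw [hyt', mul_pow, mul_pow] at hy2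
        linear_combination hxe' - hy2
      have hcross : x ^ d₂ * x' ^ d₁ = x' ^ d₂ * x ^ d₁ := by
        have := mul_right_cancel₀ (sub_ne_zero.mpr htd2)
          (show x ^ d₂ * x' ^ d₁ * (t ^ d₂ - 1) = x' ^ d₂ * x ^ d₁ * (t ^ d₂ - 1) by
            linear_combination x' ^ d₁ * hA - x ^ d₁ * hB)
        exact this
      have hvx : v * x ^ d₁ = v * x' ^ d₁ := by
        linear_combination x ^ d₁ * hxe' - x' ^ d₁ * hxe - hcross
      have hxd : x ^ d₁ = x' ^ d₁ := mul_left_cancel₀ hv hvx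
      have hu : (x' * x⁻¹) ^ d₁ = 1 := by
        rw [mul_pow, inv_pow, ← hxd]
        field_simp
      have hxx : x' = x := by
        have := aux_pow_eq_one (mul_ne_zero hx0' (inv_ne_zero hx0)) h1 hu
        field_simp at this
        exact this
      have hyy : y' = y := by rw [hyt', hxx, ← hyt]
      exact Prod.ext hxx.symm hyy.symm
    calc S.offDiag.card ≤ (Finset.univ \ ({0, 1} : Finset (ZMod p))).card :=
          Finset.card_le_card_of_injOn (fun q => q.2 * q.1⁻¹) hmaps hinj
      _ = p - 2 := by
          rw [Finset.card_sdiff_of_subset hsub, Finset.card_univ, ZMod.card]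
          congr 1
          rw [Finset.card_insert_of_notMem (by simp),
            Finset.card_singleton]
  rw [Finset.offDiag_card] at key
  set N := S.card with hN
  have hnat : N * N ≤ p - 2 + N := by omega
  have hp2 : 2 ≤ p := by omega
  have hreal : (N : ℝ) * N ≤ (p : ℝ) - 2 + N := by
    have := Nat.cast_le (α := ℝ).mpr hnat
    push_cast [Nat.cast_sub hp2] at this
    linarith
  have hs0 : (0:ℝ) ≤ Real.sqrt ((p : ℝ) - 1) := Real.sqrt_nonneg _
  have hs2 : Real.sqrt ((p : ℝ) - 1) ^ 2 = (p : ℝ) - 1 := by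
    rw [Real.sq_sqrt]
    have : (5:ℝ) ≤ p := by exact_mod_cast hp
    linarith
  nlinarith [sq_nonneg ((N : ℝ) - 1/2 - Real.sqrt ((p : ℝ) - 1)), hs0, hs2, hreal]
end

section
/- Let p ≥ 5 be prime, β a primitive root modulo p, and u an integer. The set of x ∈ {1, ..., p-1} with x ≡ β^(x-1+u) (mod p) (the fixed points of the shifted exponential Welch Costas array) is a Sidon set in {1,...,p-1}: if x₁, x₂, x₃, x₄ are such fixed points with x₁ - x₂ = x₃ - x₄ ≠ 0, then x₁ = x₃ and x₂ = x₄. -/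
/-!
The exponents of two fixed-point pairs with the same difference have the same sum, so the fixed
points satisfy `x₁ + x₄ = x₂ + x₃` and, through `β`, also `x₁ x₄ = x₂ x₃` in `𝔽_p`. Hence `x₁` and
`x₄` are the two roots of the same quadratic as `x₂` and `x₃`; since `x₁ ≠ x₂`, we get `x₁ = x₃`.
-/

theorem eq_or_eq_of_add_eq_add_of_mul_eq_mul {R : Type*} [CommRing R] [NoZeroDivisors R]
    {a b c d : R} (hsum : a + d = b + c) (hprod : a * d = b * c) : a = b ∨ a = c := by
  have h : (a - b) * (a - c) = 0 := by linear_combination a * hsum - hprod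
  rcases mul_eq_zero.mp h with h | h
  · exact Or.inl (sub_eq_zero.mp h)
  · exact Or.inr (sub_eq_zero.mp h)

theorem zpow_mul_zpow_eq_of_add_eq_add {G : Type*} [CommGroup G] (β : G) {a b c d : ℤ}
    (h : a + d = b + c) : β ^ a * β ^ d = β ^ b * β ^ c := by
  rw [← zpow_add, ← zpow_add, h]

theorem ZMod.eq_of_natCast_eq_natCast_of_lt (p : ℕ) {a b : ℕ} (ha : a < p) (hb : b < p)
    (h : (a : ZMod p) = b) : a = b := by
  rwa [ZMod.natCast_eq_natCast_iff', Nat.mod_eq_of_lt ha, Nat.mod_eq_of_lt hb] at h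

theorem stmt_7_general (p : ℕ) [Fact p.Prime] (β : (ZMod p)ˣ)
    (u : ℤ) (x₁ x₂ x₃ x₄ : ℕ)
    (h₁ : x₁ ∈ Finset.Icc 1 (p - 1)) (h₂ : x₂ ∈ Finset.Icc 1 (p - 1))
    (h₃ : x₃ ∈ Finset.Icc 1 (p - 1))
    (f₁ : (x₁ : ZMod p) = ((β ^ ((x₁ : ℤ) - 1 + u) : (ZMod p)ˣ) : ZMod p))
    (f₂ : (x₂ : ZMod p) = ((β ^ ((x₂ : ℤ) - 1 + u) : (ZMod p)ˣ) : ZMod p))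
    (f₃ : (x₃ : ZMod p) = ((β ^ ((x₃ : ℤ) - 1 + u) : (ZMod p)ˣ) : ZMod p))
    (f₄ : (x₄ : ZMod p) = ((β ^ ((x₄ : ℤ) - 1 + u) : (ZMod p)ˣ) : ZMod p))
    (hdiff : (x₁ : ℤ) - x₂ = (x₃ : ℤ) - x₄) (hne : (x₁ : ℤ) - x₂ ≠ 0) :
    x₁ = x₃ ∧ x₂ = x₄ := by
  have hp := (Fact.out : p.Prime).pos
  simp only [Finset.mem_Icc] at h₁ h₂ h₃
  have hsum : (x₁ : ZMod p) + x₄ = x₂ + x₃ := by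
    have : (x₁ : ℤ) + x₄ = x₂ + x₃ := by omega
    exact_mod_cast congrArg (Int.cast : ℤ → ZMod p) this
  have hprod : (x₁ : ZMod p) * x₄ = x₂ * x₃ := by
    rw [f₁, f₂, f₃, f₄, ← Units.val_mul, ← Units.val_mul,
      zpow_mul_zpow_eq_of_add_eq_add β]
    omega
  rcases eq_or_eq_of_add_eq_add_of_mul_eq_mul hsum hprod with h | h
  · exact absurd (ZMod.eq_of_natCast_eq_natCast_of_lt p (by omega) (by omega) h) (by omega)
  · have := ZMod.eq_of_natCast_eq_natCast_of_lt p (by omega) (by omega) h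
    omega

/-- The fixed points of a shifted exponential Welch Costas array form a Sidon set. -/
theorem stmt_7 (p : ℕ) [Fact p.Prime] (hp5 : 5 ≤ p) (β : (ZMod p)ˣ)
    (hβ : orderOf β = p - 1) (u : ℤ) (x₁ x₂ x₃ x₄ : ℕ)
    (h₁ : x₁ ∈ Finset.Icc 1 (p - 1)) (h₂ : x₂ ∈ Finset.Icc 1 (p - 1))
    (h₃ : x₃ ∈ Finset.Icc 1 (p - 1)) (h₄ : x₄ ∈ Finset.Icc 1 (p - 1))
    (f₁ : (x₁ : ZMod p) = ((β ^ ((x₁ : ℤ) - 1 + u) : (ZMod p)ˣ) : ZMod p))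
    (f₂ : (x₂ : ZMod p) = ((β ^ ((x₂ : ℤ) - 1 + u) : (ZMod p)ˣ) : ZMod p))
    (f₃ : (x₃ : ZMod p) = ((β ^ ((x₃ : ℤ) - 1 + u) : (ZMod p)ˣ) : ZMod p))
    (f₄ : (x₄ : ZMod p) = ((β ^ ((x₄ : ℤ) - 1 + u) : (ZMod p)ˣ) : ZMod p))
    (hdiff : (x₁ : ℤ) - x₂ = (x₃ : ℤ) - x₄) (hne : (x₁ : ℤ) - x₂ ≠ 0) :
    x₁ = x₃ ∧ x₂ = x₄ :=
  stmt_7_general p β u x₁ x₂ x₃ x₄ h₁ h₂ h₃ f₁ f₂ f₃ f₄ hdiff hne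
end

section
/- Let p ≥ 5 be prime, α a primitive root modulo p, d with gcd(d, p-1) = 1, and u an arbitrary integer. Then the number of x ∈ {1, ..., p-1} with x^d ≡ α^(x-1+u) (mod p) is strictly less than (p-1)^(1/2) + (p-1)^(1/4) + 1/2. -/
set_option maxHeartbeats 1000000


lemma gauss_Icc (m : ℕ) : (∑ ℓ ∈ Finset.Icc 1 m, ℓ) * 2 = m * (m + 1) := by
  induction m with
  | zero => simp
  | succ m ih =>
    rw [show Finset.Icc 1 (m+1) = insert (m+1) (Finset.Icc 1 m) by
      ext x; simp [Finset.mem_Icc]; omega]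
    rw [Finset.sum_insert (by simp)]
    ring_nf
    ring_nf at ih
    omega

lemma keypoly (r m : ℝ) (hm1 : 1 ≤ m) (hmr : m ≤ r) (hrm : r ≤ m + 1) :
    4*(r^4 - 1)*(m+1) < m*(2*r^2 + 2*r - m)^2 := by
  nlinarith [sq_nonneg (r - m), sq_nonneg (m + 1 - r), mul_nonneg (sub_nonneg.2 hmr) (sub_nonneg.2 hrm),
    mul_nonneg (mul_nonneg (sub_nonneg.2 hmr) (sub_nonneg.2 hrm)) (sub_nonneg.2 hm1),
    sq_nonneg r, mul_pos (lt_of_lt_of_le one_pos hm1) (lt_of_lt_of_le one_pos hm1),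
    mul_nonneg (sub_nonneg.2 hmr) (sub_nonneg.2 hm1), sq_nonneg (r - 1), sq_nonneg (m - 1)]


lemma aux_sum_distinct (s : Finset ℕ) (h : ∀ x ∈ s, 1 ≤ x) :
    s.card * (s.card + 1) ≤ 2 * ∑ x ∈ s, x := by
  induction s using Finset.induction_on_max with
  | empty => simp
  | insert a s ha ih =>
    have h1 : ∀ x ∈ s, 1 ≤ x := fun x hx => h x (Finset.mem_insert_of_mem hx)
    have hca : s.card ≤ a - 1 := by
      have : s ⊆ Finset.Icc 1 (a-1) := fun x hx =>
        Finset.mem_Icc.mpr ⟨h1 x hx, by have := ha x hx; omega⟩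
      simpa using Finset.card_le_card this
    have hans : a ∉ s := fun hin => lt_irrefl a (ha a hin)
    have ha1 : 1 ≤ a := h a (Finset.mem_insert_self a s)
    rw [Finset.card_insert_of_notMem hans, Finset.sum_insert hans]
    have := ih h1
    have hca2 : s.card + 1 ≤ a := by omega
    nlinarith [this, hca2]


lemma aux_sidon_count (n m : ℕ) (hn : 1 ≤ n) (S : Finset ℕ) (hS : S ⊆ Finset.Icc 1 n)
    (hsid : ∀ a ∈ S, ∀ b ∈ S, ∀ c ∈ S, ∀ e ∈ S, a + e = b + c → a = b ∨ a = c) :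
    (∑ ℓ ∈ Finset.Icc 1 m, (S.card - ℓ)) * ((∑ ℓ ∈ Finset.Icc 1 m, (S.card - ℓ)) + 1)
      ≤ (n - 1) * (m * (m + 1)) := by
  obtain ⟨n', rfl⟩ : ∃ n', n = n' + 1 := ⟨n - 1, by omega⟩
  set k := S.card with hk
  set e := S.orderEmbOfFin (rfl : S.card = k) with he
  set b : ℕ → ℕ := fun i => if h : i < k then e ⟨i, h⟩ else 0 with hbdef
  have hb_mem : ∀ i, i < k → b i ∈ S := by
    intro i hi; simp only [hbdef, dif_pos hi]; exact Finset.orderEmbOfFin_mem S rfl _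
  have hb_mono : ∀ i j, i < j → j < k → b i < b j := by
    intro i j hij hj
    simp only [hbdef, dif_pos (lt_trans hij hj), dif_pos hj]
    exact e.strictMono (show (⟨i, lt_trans hij hj⟩ : Fin k) < ⟨j, hj⟩ from hij)
  -- bounds on b
  have hb_ub : ∀ i, i < k → b i ≤ n' + 1 := fun i hi => (Finset.mem_Icc.mp (hS (hb_mem i hi))).2
  have hb_lb : ∀ i, i < k → 1 ≤ b i := fun i hi => (Finset.mem_Icc.mp (hS (hb_mem i hi))).1
  classical
  set I : Finset (ℕ × ℕ) :=
    (Finset.Icc 1 m).biUnion (fun ℓ => (Finset.range (k - ℓ)).image fun i => (i, i + ℓ)) with hI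
  have hdisj : ∀ ℓ₁ ∈ Finset.Icc 1 m, ∀ ℓ₂ ∈ Finset.Icc 1 m, ℓ₁ ≠ ℓ₂ →
      Disjoint ((Finset.range (k - ℓ₁)).image fun i => (i, i + ℓ₁))
               ((Finset.range (k - ℓ₂)).image fun i => (i, i + ℓ₂)) := by
    intro ℓ₁ _ ℓ₂ _ hne
    rw [Finset.disjoint_left]
    rintro q hq1 hq2
    obtain ⟨i1, _, rfl⟩ := Finset.mem_image.mp hq1
    obtain ⟨i2, _, h2⟩ := Finset.mem_image.mp hq2
    have := (Prod.ext_iff.mp h2)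
    omega
  have hmemI : ∀ q ∈ I, q.1 < q.2 ∧ q.2 < k := by
    intro q hq
    obtain ⟨ℓ, hℓ, hq⟩ := Finset.mem_biUnion.mp hq
    obtain ⟨i, hi, rfl⟩ := Finset.mem_image.mp hq
    simp only [Finset.mem_Icc] at hℓ
    simp only [Finset.mem_range] at hi
    constructor <;> omega
  have hcardI : I.card = ∑ ℓ ∈ Finset.Icc 1 m, (k - ℓ) := by
    rw [hI, Finset.card_biUnion hdisj]
    refine Finset.sum_congr rfl fun ℓ _ => ?_
    rw [Finset.card_image_of_injective _ (fun i j hij => (Prod.ext_iff.mp hij).1),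
      Finset.card_range]
  set T := ∑ ℓ ∈ Finset.Icc 1 m, (k - ℓ) with hT
  set f : ℕ × ℕ → ℕ := fun q => b q.2 - b q.1 with hf
  have hf_inj : ∀ q₁ ∈ I, ∀ q₂ ∈ I, f q₁ = f q₂ → q₁ = q₂ := by
    intro q₁ hq₁ q₂ hq₂ hfe
    obtain ⟨h11, h12⟩ := hmemI q₁ hq₁
    obtain ⟨h21, h22⟩ := hmemI q₂ hq₂
    have hb1 : b q₁.1 < b q₁.2 := hb_mono _ _ h11 h12
    have hb2 : b q₂.1 < b q₂.2 := hb_mono _ _ h21 h22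
    have hadd : b q₁.2 + b q₂.1 = b q₂.2 + b q₁.1 := by
      simp only [hf] at hfe; omega
    have := hsid (b q₁.2) (hb_mem _ h12) (b q₂.2) (hb_mem _ h22)
      (b q₁.1) (hb_mem _ (lt_trans h11 h12)) (b q₂.1) (hb_mem _ (lt_trans h21 h22))
      (by omega)
    rcases this with h | h
    · -- b q₁.2 = b q₂.2
      have h2eq : q₁.2 = q₂.2 := by
        by_contra hne
        rcases Nat.lt_or_ge q₁.2 q₂.2 with hlt | hge
        · exact absurd h (Nat.ne_of_lt (hb_mono _ _ hlt h22))
        · exact absurd h.symm (Nat.ne_of_lt (hb_mono _ _ (lt_of_le_of_ne hge (Ne.symm hne)) h12))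
      have h1eq : b q₁.1 = b q₂.1 := by omega
      have h1eq' : q₁.1 = q₂.1 := by
        by_contra hne
        rcases Nat.lt_or_ge q₁.1 q₂.1 with hlt | hge
        · exact absurd h1eq (Nat.ne_of_lt (hb_mono _ _ hlt (lt_trans h21 h22)))
        · exact absurd h1eq.symm (Nat.ne_of_lt (hb_mono _ _ (lt_of_le_of_ne hge (Ne.symm hne)) (lt_trans h11 h12)))
      exact Prod.ext h1eq' h2eq
    · -- b q₁.2 = b q₁.1 : contradiction
      exact absurd h.symm (Nat.ne_of_lt hb1)
  -- lower bound : T * (T+1) ≤ 2 * ∑_{q ∈ I} f q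
  have hlow : T * (T + 1) ≤ 2 * ∑ q ∈ I, f q := by
    have hcard : (I.image f).card = T := by
      rw [Finset.card_image_of_injOn (fun x hx y hy => hf_inj x hx y hy), hcardI]
    have hsumim : ∑ x ∈ I.image f, x = ∑ q ∈ I, f q := Finset.sum_image hf_inj
    have hpos : ∀ x ∈ I.image f, 1 ≤ x := by
      intro x hx
      obtain ⟨q, hq, rfl⟩ := Finset.mem_image.mp hx
      obtain ⟨h1, h2⟩ := hmemI q hq
      have := hb_mono _ _ h1 h2
      simp only [hf]; omega
    calc T * (T + 1) = (I.image f).card * ((I.image f).card + 1) := by rw [hcard]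
      _ ≤ 2 * ∑ x ∈ I.image f, x := aux_sum_distinct _ hpos
      _ = 2 * ∑ q ∈ I, f q := by rw [hsumim]
  -- upper bound : ∑_{q ∈ I} f q ≤ ∑ ℓ, ℓ * n'
  have hup : ∑ q ∈ I, f q ≤ ∑ ℓ ∈ Finset.Icc 1 m, ℓ * n' := by
    rw [hI, Finset.sum_biUnion (fun ℓ₁ h1 ℓ₂ h2 hne => hdisj ℓ₁ h1 ℓ₂ h2 hne)]
    refine Finset.sum_le_sum fun ℓ hℓ => ?_
    rw [Finset.sum_image (fun i _ j _ hij => (Prod.ext_iff.mp hij).1)]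
    simp only [hf]
    rcases Nat.lt_or_ge k ℓ with hkl | hkl
    · rw [show k - ℓ = 0 by omega]; simp
    -- ℓ ≤ k
    have hmono' : ∀ i ∈ Finset.range (k - ℓ), b i ≤ b (i + ℓ) := by
      intro i hi
      simp only [Finset.mem_range] at hi
      have hℓ1 : 1 ≤ ℓ := (Finset.mem_Icc.mp hℓ).1
      exact le_of_lt (hb_mono i (i + ℓ) (by omega) (by omega))
    rw [Finset.sum_tsub_distrib _ hmono']
    have hre : ∑ i ∈ Finset.range (k - ℓ), b (i + ℓ) = ∑ i ∈ Finset.Ico ℓ k, b i := by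
      rw [Finset.sum_Ico_eq_sum_range]
      exact Finset.sum_congr rfl fun i _ => by rw [Nat.add_comm]
    rw [hre]
    -- A - B ≤ ℓ * n'
    have e1 : ∑ i ∈ Finset.Ico 0 ℓ, b i + ∑ i ∈ Finset.Ico ℓ k, b i = ∑ i ∈ Finset.Ico 0 k, b i :=
      Finset.sum_Ico_consecutive b (Nat.zero_le _) hkl
    have e2 : ∑ i ∈ Finset.Ico 0 (k - ℓ), b i + ∑ i ∈ Finset.Ico (k - ℓ) k, b i
        = ∑ i ∈ Finset.Ico 0 k, b i :=
      Finset.sum_Ico_consecutive b (Nat.zero_le _) (by omega)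
    have hY : ∑ i ∈ Finset.Ico (k - ℓ) k, b i ≤ ℓ * (n' + 1) := by
      calc ∑ i ∈ Finset.Ico (k - ℓ) k, b i ≤ ∑ _i ∈ Finset.Ico (k - ℓ) k, (n' + 1) :=
            Finset.sum_le_sum fun i hi => hb_ub i (Finset.mem_Ico.mp hi).2
        _ = ℓ * (n' + 1) := by rw [Finset.sum_const, Nat.card_Ico]; rw [show k - (k - ℓ) = ℓ by omega]; ring
    have hX : ℓ * 1 ≤ ∑ i ∈ Finset.Ico 0 ℓ, b i := by
      calc ℓ * 1 = ∑ _i ∈ Finset.Ico 0 ℓ, 1 := by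
            rw [Finset.sum_const, Nat.card_Ico, smul_eq_mul]; omega
        _ ≤ ∑ i ∈ Finset.Ico 0 ℓ, b i := Finset.sum_le_sum fun i hi => hb_lb i (by
            have := (Finset.mem_Ico.mp hi).2; omega)
    have hrangeeq : ∑ i ∈ Finset.range (k - ℓ), b i = ∑ i ∈ Finset.Ico 0 (k - ℓ), b i := by
      rw [Finset.range_eq_Ico]
    rw [hrangeeq]
    -- now linear arithmetic
    have : ∑ i ∈ Finset.Ico ℓ k, b i ≤ ∑ i ∈ Finset.Ico 0 (k-ℓ), b i + ℓ * n' := by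
      have hmul : ℓ * (n' + 1) = ℓ * n' + ℓ * 1 := by ring
      omega
    omega
  -- Gauss sum
  have hgauss : 2 * ∑ ℓ ∈ Finset.Icc 1 m, ℓ * n' = n' * (m * (m + 1)) := by
    have h1 : ∑ ℓ ∈ Finset.Icc 1 m, ℓ * n' = (∑ ℓ ∈ Finset.Icc 1 m, ℓ) * n' := by
      rw [Finset.sum_mul]
    have h2 : ∑ ℓ ∈ Finset.Icc 1 m, ℓ = ∑ ℓ ∈ Finset.range (m + 1), ℓ := by
      rw [Finset.range_eq_Ico, ← Finset.Ico_add_one_right_eq_Icc]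
      rw [Finset.sum_Ico_eq_sum_range, Finset.sum_Ico_eq_sum_range]
      simp only [Nat.sub_zero, Nat.zero_add]
      rw [Finset.sum_range_succ' (fun x => x) m]
      simp [Nat.add_comm]
    have h3 := Finset.sum_range_id_mul_two (m + 1)
    simp only [Nat.add_sub_cancel] at h3
    calc 2 * ∑ ℓ ∈ Finset.Icc 1 m, ℓ * n' = ((∑ ℓ ∈ Finset.range (m+1), ℓ) * 2) * n' := by
          rw [h1, h2]; ring
      _ = ((m + 1) * m) * n' := by rw [h3]
      _ = n' * (m * (m + 1)) := by ring
  have : T * (T + 1) ≤ n' * (m * (m+1)) := le_trans hlow (by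
    calc 2 * ∑ q ∈ I, f q ≤ 2 * ∑ ℓ ∈ Finset.Icc 1 m, ℓ * n' := by omega
      _ = n' * (m * (m+1)) := hgauss)
  simpa using this

/-- Bound on the cross-correlation between a power permutation and an exponential Welch
Costas array, for arbitrary u and v = 0. -/
theorem stmt_8 (p : ℕ) [Fact p.Prime] (hp5 : 5 ≤ p) (α : (ZMod p)ˣ)
    (hα : orderOf α = p - 1) (d : ℕ) (hd : Nat.Coprime d (p - 1)) (u : ℤ) :
    (((Finset.Icc 1 (p - 1)).filter (fun x : ℕ =>
        (x : ZMod p) ^ d = ((α ^ ((x : ℤ) - 1 + u) : (ZMod p)ˣ) : ZMod p))).card : ℝ) <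
      Real.sqrt ((p : ℝ) - 1) + ((p : ℝ) - 1) ^ ((1 : ℝ) / 4) + 1 / 2 := by
  classical
  haveI : NeZero p := ⟨by omega⟩
  set S := (Finset.Icc 1 (p - 1)).filter (fun x : ℕ =>
      (x : ZMod p) ^ d = ((α ^ ((x : ℤ) - 1 + u) : (ZMod p)ˣ) : ZMod p)) with hSdef
  -- injectivity of x ↦ x^d on ZMod p
  obtain ⟨d', -, hd'⟩ := Nat.exists_mul_mod_eq_one_of_coprime hd (by omega : 1 < p - 1)
  obtain ⟨t, ht⟩ : ∃ t, d * d' = (p - 1) * t + 1 := by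
    refine ⟨d * d' / (p - 1), ?_⟩
    have := Nat.div_add_mod (d * d') (p - 1)
    omega
  have hxdd : ∀ x : ZMod p, x ^ (d * d') = x := by
    intro x
    rcases eq_or_ne x 0 with rfl | hx
    · rw [zero_pow (by omega)]
    · rw [ht, pow_add, pow_one, pow_mul, ZMod.pow_card_sub_one_eq_one hx, one_pow, one_mul]
  have hinj : ∀ x y : ZMod p, x ^ d = y ^ d → x = y := by
    intro x y h
    calc x = x ^ (d * d') := (hxdd x).symm
      _ = (x ^ d) ^ d' := by rw [pow_mul]
      _ = (y ^ d) ^ d' := by rw [h]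
      _ = y ^ (d * d') := by rw [pow_mul]
      _ = y := hxdd y
  have hcastinj : ∀ a b : ℕ, a < p → b < p → (a : ZMod p) = (b : ZMod p) → a = b := by
    intro a b ha hb h
    have := congrArg ZMod.val h
    rwa [ZMod.val_cast_of_lt ha, ZMod.val_cast_of_lt hb] at this
  -- Sidon property
  have hsid : ∀ a ∈ S, ∀ b ∈ S, ∀ c ∈ S, ∀ e ∈ S, a + e = b + c → a = b ∨ a = c := by
    intro a ha b hb c hc e he habce
    have hmem : ∀ x ∈ S, (1 ≤ x ∧ x ≤ p - 1) ∧
        (x : ZMod p) ^ d = ((α ^ ((x : ℤ) - 1 + u) : (ZMod p)ˣ) : ZMod p) := by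
      intro x hx
      have := Finset.mem_filter.mp hx
      exact ⟨Finset.mem_Icc.mp this.1, this.2⟩
    obtain ⟨⟨ha1, ha2⟩, Ea⟩ := hmem a ha
    obtain ⟨⟨hb1, hb2⟩, Eb⟩ := hmem b hb
    obtain ⟨⟨hc1, hc2⟩, Ec⟩ := hmem c hc
    obtain ⟨⟨he1, he2⟩, Ee⟩ := hmem e he
    have hexp : ((a : ℤ) - 1 + u) + ((e : ℤ) - 1 + u) = ((b : ℤ) - 1 + u) + ((c : ℤ) - 1 + u) := by
      have : (a : ℤ) + e = b + c := by exact_mod_cast habce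
      linarith
    have key : ((a : ZMod p) * (e : ZMod p)) ^ d = ((b : ZMod p) * (c : ZMod p)) ^ d := by
      rw [mul_pow, mul_pow, Ea, Eb, Ec, Ee, ← Units.val_mul, ← Units.val_mul,
        ← zpow_add, ← zpow_add, hexp]
    have hae : (a : ZMod p) * e = (b : ZMod p) * c := hinj _ _ key
    have hsumz : (a : ZMod p) + e = (b : ZMod p) + c := by
      have h1 : ((a + e : ℕ) : ZMod p) = ((b + c : ℕ) : ZMod p) := by rw [habce]
      push_cast at h1
      exact h1
    have hzero : ((a : ZMod p) - b) * ((a : ZMod p) - c) = 0 := by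
      linear_combination (a : ZMod p) * hsumz - hae
    rcases mul_eq_zero.mp hzero with h | h
    · left; exact hcastinj a b (by omega) (by omega) (sub_eq_zero.mp h)
    · right; exact hcastinj a c (by omega) (by omega) (sub_eq_zero.mp h)
  have hS : S ⊆ Finset.Icc 1 (p - 1) := Finset.filter_subset _ _
  -- now the counting argument
  show (S.card : ℝ) < Real.sqrt ((p : ℝ) - 1) + ((p : ℝ) - 1) ^ ((1 : ℝ) / 4) + 1 / 2
  set n := p - 1 with hn
  have hn4 : 4 ≤ n := by omega
  have hNp : ((n : ℕ) : ℝ) = (p : ℝ) - 1 := by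
    have : (1:ℕ) ≤ p := by omega
    push_cast [hn, Nat.cast_sub this]
    ring
  set N : ℝ := ((n : ℕ) : ℝ) with hNdef
  have hN0 : (0:ℝ) ≤ N := by positivity
  have hN4 : (4:ℝ) ≤ N := by
    rw [hNdef]
    exact_mod_cast hn4
  set r : ℝ := N ^ ((1 : ℝ) / 4) with hrdef
  have hr0 : 0 ≤ r := Real.rpow_nonneg hN0 _
  have hr4 : r ^ 4 = N := by
    rw [hrdef, ← Real.rpow_natCast (N ^ ((1:ℝ)/4)) 4, ← Real.rpow_mul hN0]
    norm_num
  have hr2 : r ^ 2 = Real.sqrt N := by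
    rw [hrdef, ← Real.rpow_natCast (N ^ ((1:ℝ)/4)) 2, ← Real.rpow_mul hN0,
      Real.sqrt_eq_rpow]
    norm_num
  have hr1 : 1 ≤ r := by
    by_contra hlt
    push_neg at hlt
    have : r ^ 4 < 1 := pow_lt_one₀ hr0 hlt (by norm_num)
    rw [hr4] at this; linarith
  -- rewrite the goal
  rw [show Real.sqrt ((p:ℝ) - 1) + ((p:ℝ) - 1) ^ ((1:ℝ)/4) + 1/2
      = r ^ 2 + r + 1/2 by rw [hr2, hrdef, hNp]]
  set m : ℕ := ⌊r⌋₊ with hmdef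
  have hm1 : 1 ≤ m := Nat.le_floor (by exact_mod_cast hr1)
  have hmr : (m : ℝ) ≤ r := Nat.floor_le hr0
  have hrm : r ≤ (m : ℝ) + 1 := le_of_lt (Nat.lt_floor_add_one r)
  set k := S.card with hkdef
  rcases Nat.lt_or_ge m k with hmk | hmk
  case inr => -- k ≤ m
    have : (k : ℝ) ≤ (m : ℝ) := by exact_mod_cast hmk
    have hsq : 0 ≤ Real.sqrt N := Real.sqrt_nonneg N
    rw [← hr2] at hsq
    linarith [this, hmr, hsq, sq_nonneg r]
  case inl => -- m < k
    have hcount := aux_sidon_count n m (by omega) S hS hsid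
    set T := ∑ ℓ ∈ Finset.Icc 1 m, (k - ℓ) with hTdef
    -- T in terms of k, m
    have hle : ∀ ℓ ∈ Finset.Icc 1 m, ℓ ≤ k := by
      intro ℓ hℓ; have := (Finset.mem_Icc.mp hℓ).2; omega
    have hTeq : T = k * m - ∑ ℓ ∈ Finset.Icc 1 m, ℓ := by
      rw [hTdef, Finset.sum_tsub_distrib _ hle, Finset.sum_const, Nat.card_Icc]
      simp [mul_comm]
    have hgle : ∑ ℓ ∈ Finset.Icc 1 m, ℓ ≤ k * m := by
      calc ∑ ℓ ∈ Finset.Icc 1 m, ℓ ≤ ∑ _ℓ ∈ Finset.Icc 1 m, k := Finset.sum_le_sum hle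
        _ = k * m := by rw [Finset.sum_const, Nat.card_Icc]; simp [mul_comm]
    have hg2 := gauss_Icc m
    -- real versions
    have hTr : (T : ℝ) * 2 = 2 * (k : ℝ) * m - m * (m + 1) := by
      have h1 : (T : ℝ) = (k : ℝ) * m - (∑ ℓ ∈ Finset.Icc 1 m, ℓ : ℕ) := by
        rw [hTeq, Nat.cast_sub hgle]; push_cast; ring
      have h2 : ((∑ ℓ ∈ Finset.Icc 1 m, ℓ : ℕ) : ℝ) * 2 = (m : ℝ) * (m + 1) := by
        exact_mod_cast congrArg (Nat.cast : ℕ → ℝ) hg2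
      linarith
    have hcr : (T : ℝ) * ((T : ℝ) + 1) ≤ (N - 1) * ((m : ℝ) * (m + 1)) := by
      have h1 : ((n - 1 : ℕ) : ℝ) = N - 1 := by
        rw [hNdef, Nat.cast_sub (by omega : 1 ≤ n)]; push_cast; ring
      calc (T : ℝ) * ((T : ℝ) + 1) = ((T * (T + 1) : ℕ) : ℝ) := by push_cast; ring
        _ ≤ (((n - 1) * (m * (m + 1)) : ℕ) : ℝ) := by exact_mod_cast hcount
        _ = (N - 1) * ((m : ℝ) * (m + 1)) := by rw [← h1]; push_cast; ring
    have hkey := keypoly r m (by exact_mod_cast hm1) hmr hrm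
    rw [hr4] at hkey
    -- (2T)^2 ≤ 4 T(T+1) ≤ 4 (N-1) m (m+1) < m^2 (2r^2+2r-m)^2
    have hT0 : (0:ℝ) ≤ (T : ℝ) := Nat.cast_nonneg T
    have hm0 : (0:ℝ) < (m : ℝ) := by exact_mod_cast hm1
    have hsq1 : ((m:ℝ) * (2*(k:ℝ) - m - 1)) ^ 2 ≤ 4 * (N - 1) * ((m:ℝ) * (m + 1)) := by
      have : (m:ℝ) * (2*(k:ℝ) - m - 1) = (T:ℝ) * 2 := by rw [hTr]; ring
      rw [this]
      nlinarith [hcr, hT0]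
    have hsq2 : ((m:ℝ) * (2*(k:ℝ) - m - 1)) ^ 2 < ((m:ℝ) * (2*r^2 + 2*r - m)) ^ 2 := by
      calc ((m:ℝ) * (2*(k:ℝ) - m - 1)) ^ 2 ≤ 4 * (N - 1) * ((m:ℝ) * (m + 1)) := hsq1
        _ = (m:ℝ) * (4 * (N - 1) * ((m:ℝ) + 1)) := by ring
        _ < (m:ℝ) * ((m:ℝ) * (2*r^2 + 2*r - m)^2) := by
            apply mul_lt_mul_of_pos_left _ hm0
            exact hkey
        _ = ((m:ℝ) * (2*r^2 + 2*r - m)) ^ 2 := by ring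
    have hk1 : (m:ℝ) + 1 ≤ (k:ℝ) := by exact_mod_cast hmk
    have hA0 : (0:ℝ) ≤ (m:ℝ) * (2*(k:ℝ) - m - 1) :=
      mul_nonneg (le_of_lt hm0) (by linarith)
    have hBfac : (0:ℝ) ≤ 2*r^2 + 2*r - m := by linarith [hmr, hr0, sq_nonneg r]
    have hB0 : (0:ℝ) ≤ (m:ℝ) * (2*r^2 + 2*r - m) := mul_nonneg (le_of_lt hm0) hBfac
    have hAB : (m:ℝ) * (2*(k:ℝ) - m - 1) < (m:ℝ) * (2*r^2 + 2*r - m) := by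
      nlinarith [hsq2, hA0, hB0]
    have hfin : 2*(k:ℝ) - m - 1 < 2*r^2 + 2*r - m := (mul_lt_mul_iff_right₀ hm0).mp hAB
    linarith
end

section
/- Let p be an odd prime, β a primitive root modulo p, v an integer, a a nonzero residue, and k an integer. The number of t ∈ F_p* satisfying β^(-k)·t^(α^a) ≡ t + β^(-v+1)·a (mod p), where α^a is reduced appropriately, is at most 1/2 + √(p-1), provided gcd(α^a, 1, p-1) = 1. -/
/-- Kelley–Owen-type bound for the trinomial equation β^(-k)·t^A = t + β^(-v+1)·a over F_p*. -/
theorem stmt_12 (p : ℕ) [Fact p.Prime] (hodd : Odd p) (β : (ZMod p)ˣ)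
    (hβ : orderOf β = p - 1) (v k : ℤ) (a : ZMod p) (ha : a ≠ 0)
    (A : ℕ) (hA1 : 1 < A) (hAp : A < p) (hgcd : Nat.gcd A (Nat.gcd 1 (p - 1)) = 1) :
    ((Finset.univ.filter (fun t : ZMod p => t ≠ 0 ∧
        ((β ^ (-k) : (ZMod p)ˣ) : ZMod p) * t ^ A =
          t + ((β ^ (-v + 1) : (ZMod p)ˣ) : ZMod p) * a)).card : ℝ) ≤
      1 / 2 + Real.sqrt ((p : ℝ) - 1) := by
  classical
  have hp := Fact.out (p := p.Prime)
  have hp3 : 3 ≤ p := by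
    have h2 := hp.two_le
    have := Nat.odd_iff.mp hodd
    omega
  set c : ZMod p := ((β ^ (-k) : (ZMod p)ˣ) : ZMod p) with hc_def
  set d : ZMod p := ((β ^ (-v + 1) : (ZMod p)ˣ) : ZMod p) * a with hd_def
  have hc : c ≠ 0 := Units.ne_zero _
  have hd : d ≠ 0 := mul_ne_zero (Units.ne_zero _) ha
  set S := Finset.univ.filter (fun t : ZMod p => t ≠ 0 ∧ c * t ^ A = t + d) with hS
  -- key: ratio determines the pair of roots
  have key : ∀ u y y' : ZMod p, u ≠ 1 → y ∈ S → y' ∈ S → u * y ∈ S → u * y' ∈ S →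
      y = y' := by
    intro u y y' hu hy hy' hx hx'
    simp only [hS, Finset.mem_filter, Finset.mem_univ, true_and] at hy hy' hx hx'
    obtain ⟨hy0, hy⟩ := hy
    obtain ⟨hy0', hy'⟩ := hy'
    obtain ⟨_, hx⟩ := hx
    obtain ⟨_, hx'⟩ := hx'
    rw [mul_pow] at hx hx'
    have hu1 : u - 1 ≠ 0 := sub_ne_zero_of_ne hu
    have E2 : c * y ^ A * (u - u ^ A) = d * (u - 1) := by linear_combination u * hy - hx
    have E2' : c * y' ^ A * (u - u ^ A) = d * (u - 1) := by linear_combination u * hy' - hx'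
    have hfac : u - u ^ A ≠ 0 := by
      intro h
      rw [h, mul_zero] at E2
      exact mul_ne_zero hd hu1 E2.symm
    have hyA : y ^ A = y' ^ A := by
      have h1 : c * y ^ A * (u - u ^ A) = c * y' ^ A * (u - u ^ A) := E2.trans E2'.symm
      have h2 := mul_right_cancel₀ hfac h1
      exact mul_left_cancel₀ hc h2
    have E1 : c * y ^ A * (u ^ A - 1) = (u - 1) * y := by linear_combination hx - hy
    have E1' : c * y' ^ A * (u ^ A - 1) = (u - 1) * y' := by linear_combination hx' - hy'
    have h3 : (u - 1) * y = (u - 1) * y' := by rw [← E1, ← E1', hyA]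
    exact mul_left_cancel₀ hu1 h3
  -- count distinct ordered pairs via injective ratio map
  have hcount : S.card * S.card - S.card ≤ p - 2 := by
    have hmap : ∀ q ∈ S.offDiag, q.1 * q.2⁻¹ ∈ Finset.univ \ ({0, 1} : Finset (ZMod p)) := by
      intro q hq
      rw [Finset.mem_offDiag] at hq
      obtain ⟨h1, h2, h3⟩ := hq
      simp only [hS, Finset.mem_filter, Finset.mem_univ, true_and] at h1 h2
      have hx0 : q.1 ≠ 0 := h1.1
      have hy0 : q.2 ≠ 0 := h2.1
      simp only [Finset.mem_sdiff, Finset.mem_univ, Finset.mem_insert, Finset.mem_singleton,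
        true_and]
      push_neg
      constructor
      · exact mul_ne_zero hx0 (inv_ne_zero hy0)
      · intro h
        apply h3
        have := congrArg (· * q.2) h
        simpa [mul_assoc, inv_mul_cancel₀ hy0] using this
    have hinj : Set.InjOn (fun q : ZMod p × ZMod p => q.1 * q.2⁻¹) S.offDiag := by
      intro q hq q' hq' heq
      simp only [Finset.coe_offDiag, Set.mem_offDiag] at hq hq'
      obtain ⟨hq1, hq2, hq3⟩ := hq
      obtain ⟨hq1', hq2', hq3'⟩ := hq'
      have hy0 : q.2 ≠ 0 := by
        have := hq2; simp only [hS, Finset.mem_coe, Finset.mem_filter] at this; exact this.2.1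
      have hy0' : q'.2 ≠ 0 := by
        have := hq2'; simp only [hS, Finset.mem_coe, Finset.mem_filter] at this; exact this.2.1
      set u := q.1 * q.2⁻¹ with hu_def
      have hxu : u * q.2 = q.1 := by
        rw [hu_def, mul_assoc, inv_mul_cancel₀ hy0, mul_one]
      have heq' : u = q'.1 * q'.2⁻¹ := heq
      have hxu' : u * q'.2 = q'.1 := by
        rw [heq']; field_simp
      have hu1 : u ≠ 1 := by
        intro h
        rw [h, one_mul] at hxu
        exact hq3 hxu.symm
      have hyy : q.2 = q'.2 := by
        apply key u q.2 q'.2 hu1 (by simpa using hq2) (by simpa using hq2')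
        · rw [hxu]; simpa using hq1
        · rw [hxu']; simpa using hq1'
      have hxx : q.1 = q'.1 := by rw [← hxu, ← hxu', hyy]
      exact Prod.ext hxx hyy
    have hle := Finset.card_le_card_of_injOn _ hmap hinj
    have hcard1 : S.offDiag.card = S.card * S.card - S.card := Finset.offDiag_card S
    have hcard2 : (Finset.univ \ ({0, 1} : Finset (ZMod p))).card = p - 2 := by
      rw [Finset.card_sdiff_of_subset (Finset.subset_univ _), Finset.card_univ, ZMod.card,
        Finset.card_pair (zero_ne_one)]
    rw [hcard1, hcard2] at hle
    exact hle
  -- conclude the real inequality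
  set N := S.card with hN_def
  have h1 : N * N + 2 ≤ p + N := by omega
  have h1R : (N : ℝ) * N + 2 ≤ (p : ℝ) + N := by exact_mod_cast h1
  have hs : (0 : ℝ) ≤ Real.sqrt ((p : ℝ) - 1) := Real.sqrt_nonneg _
  have hs2 : Real.sqrt ((p : ℝ) - 1) ^ 2 = (p : ℝ) - 1 := by
    rw [Real.sq_sqrt]
    have : (3 : ℝ) ≤ p := by exact_mod_cast hp3
    linarith
  nlinarith [hs, hs2, h1R]
end

section
/- Let p ≥ 5 be prime and α, β primitive roots modulo p. For any integers u, v, the number of pairs (x,y) with x, y ∈ {1,...,p-1} satisfying y = (α^(x-1) mod p) + v and (β^(y-1) mod p) = x + u is at most 4p·log_p(α) + 1, where log_p(α) = ln(α)/ln(p) is the real logarithm. -/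
open Finset
namespace Costas

open scoped Classical in
noncomputable def sols (p α β : ℕ) (u v : ℤ) : Finset ℕ :=
  (Finset.Icc 1 (p - 1)).filter (fun x => ∃ y ∈ Finset.Icc 1 (p - 1),
    (y : ℤ) = ((α ^ (x - 1) % p : ℕ) : ℤ) + v ∧
    ((β ^ (y - 1) % p : ℕ) : ℤ) = (x : ℤ) + u)

lemma card_main_le (p α β : ℕ) (u v : ℤ) :
    (((Finset.Icc 1 (p - 1)) ×ˢ (Finset.Icc 1 (p - 1))).filter (fun xy : ℕ × ℕ =>
        (xy.2 : ℤ) = ((α ^ (xy.1 - 1) % p : ℕ) : ℤ) + v ∧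
        ((β ^ (xy.2 - 1) % p : ℕ) : ℤ) = (xy.1 : ℤ) + u)).card ≤ (sols p α β u v).card := by
  classical
  apply Finset.card_le_card_of_injOn Prod.fst
  · intro xy hxy
    simp only [Finset.mem_coe, Finset.mem_filter, Finset.mem_product] at hxy
    simp only [Finset.mem_coe, sols, Finset.mem_filter]
    exact ⟨hxy.1.1, xy.2, hxy.1.2, hxy.2.1, hxy.2.2⟩
  · intro a ha b hb hab
    simp only [Finset.mem_coe, Finset.mem_filter, Finset.mem_product] at ha hb
    have h1 := ha.2.1
    have h2 := hb.2.1
    rw [hab] at h1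
    rw [← h2] at h1
    have : a.2 = b.2 := by exact_mod_cast h1
    exact Prod.ext hab this

lemma pair_eq (p α β : ℕ) (u v : ℤ) (hp : p.Prime) (hp5 : 5 ≤ p)
    (hβ : orderOf ((β : ZMod p)) = p - 1)
    (hα2 : 2 ≤ α) (x d : ℕ) (hd : 1 ≤ d) (hx : x ∈ sols p α β u v) (hxd : x + d ∈ sols p α β u v) :
    ((((x : ℤ) + u : ℤ) : ZMod p) + (d : ZMod p)) *
        (β : ZMod p) ^ (((1 - v) % ((p - 1 : ℕ) : ℤ)).toNat + α ^ d * (α ^ (x - 1) % p) / p) =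
      (((x : ℤ) + u : ℤ) : ZMod p) ^ (α ^ d) *
        (β : ZMod p) ^ (((1 - v) % ((p - 1 : ℕ) : ℤ)).toNat * α ^ d) := by
  haveI : Fact p.Prime := ⟨hp⟩
  have hp0 : 0 < p := hp.pos
  have hp1 : 1 < p := hp.one_lt
  have hpm1 : (1:ℕ) ≤ p - 1 := by omega
  -- unpack memberships
  simp only [sols, Finset.mem_filter, Finset.mem_Icc] at hx hxd
  obtain ⟨⟨hx1, hx2⟩, y, ⟨hy1, hy2⟩, hyA, hyX⟩ := hx
  obtain ⟨⟨hx1', hx2'⟩, y', ⟨hy1', hy2'⟩, hyA', hyX'⟩ := hxd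
  set A : ℕ := α ^ (x - 1) % p with hA
  set A' : ℕ := α ^ (x + d - 1) % p with hA'
  set X : ℕ := β ^ (y - 1) % p with hX
  set X' : ℕ := β ^ (y' - 1) % p with hX'
  set t : ℕ := α ^ d with ht
  set m : ℕ := t * A / p with hm
  set r : ℕ := ((1 - v) % ((p - 1 : ℕ) : ℤ)).toNat with hr
  -- β ≠ 0 in ZMod p
  have hβord : (β : ZMod p) ^ (p - 1) = 1 := by
    rw [← hβ]; exact pow_orderOf_eq_one _
  have hβ0 : (β : ZMod p) ≠ 0 := by
    intro h
    rw [h, zero_pow (by omega : p - 1 ≠ 0)] at hβord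
    exact zero_ne_one hβord
  -- Fermat: β^p = β
  have hβp : (β : ZMod p) ^ p = (β : ZMod p) := by
    have h1 : (β : ZMod p) ^ ((p - 1) + 1) = (β : ZMod p) := by
      rw [pow_succ, hβord, one_mul]
    rw [← h1]; congr 1; omega
  -- (3) X' = X + d
  have hXX' : X' = X + d := by
    have : (X' : ℤ) = (X : ℤ) + d := by
      rw [hyX, hyX']; push_cast; ring
    exact_mod_cast this
  -- (4) y' + A = y + A'
  have hyy' : y' + A = y + A' := by
    have : (y' : ℤ) + A = (y : ℤ) + A' := by rw [hyA, hyA']; ring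
    exact_mod_cast this
  -- (7) t * A = p * m + A'
  have hA'mod : A' = t * A % p := by
    have hxd1 : x + d - 1 = (x - 1) + d := by omega
    have h1 : A' = (α ^ (x - 1) * t) % p := by rw [hA', hxd1, pow_add, ht]
    have h2 : (α ^ (x - 1) * t) % p = (A * t) % p := by
      conv_lhs => rw [Nat.mul_mod]
      conv_rhs => rw [Nat.mul_mod]
      rw [hA, Nat.mod_mod_of_dvd _ (dvd_refl p)]
    rw [h1, h2, mul_comm]
  have htA : t * A = p * m + A' := by
    rw [hm, hA'mod]; exact (Nat.div_add_mod _ _).symm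
  have htpos : 0 < t := pow_pos (by omega) d
  have hmt : m < t := by
    rw [hm]
    apply Nat.div_lt_of_lt_mul
    have hAp : A < p := Nat.mod_lt _ hp0
    calc t * A < t * p := (Nat.mul_lt_mul_left htpos).mpr hAp
      _ = p * t := mul_comm _ _
  -- casts to ZMod p
  have hXc : ((X : ℕ) : ZMod p) = (β : ZMod p) ^ (y - 1) := by
    rw [hX, ZMod.natCast_mod, Nat.cast_pow]
  have hX'c : ((X' : ℕ) : ZMod p) = (β : ZMod p) ^ (y' - 1) := by
    rw [hX', ZMod.natCast_mod, Nat.cast_pow]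
  -- key1
  have key1 : ((X' : ℕ) : ZMod p) * (β : ZMod p) ^ A = ((X : ℕ) : ZMod p) * (β : ZMod p) ^ A' := by
    rw [hXc, hX'c, ← pow_add, ← pow_add]
    congr 1
    omega
  -- key2
  have key2 : ((β : ZMod p) ^ A) ^ t = (β : ZMod p) ^ m * (β : ZMod p) ^ A' := by
    rw [← pow_mul, mul_comm A t, htA, pow_add, pow_mul, hβp]
  -- key3
  have hn0 : ((p - 1 : ℕ) : ℤ) ≠ 0 := by
    simp only [ne_eq, Nat.cast_eq_zero]
    omega
  have hr0 : (r : ℤ) = (1 - v) % ((p - 1 : ℕ) : ℤ) := by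
    rw [hr]
    exact Int.toNat_of_nonneg (Int.emod_nonneg _ hn0)
  have hmod : A ≡ (y - 1) + r [MOD (p - 1)] := by
    rw [Nat.modEq_iff_dvd]
    have h2 : ((p - 1 : ℕ) : ℤ) ∣ ((1 - v) % ((p - 1 : ℕ) : ℤ) - (1 - v)) := by
      refine ⟨-((1 - v) / ((p - 1 : ℕ) : ℤ)), ?_⟩
      have h3 := Int.mul_ediv_add_emod (1 - v) ((p - 1 : ℕ) : ℤ)
      linear_combination h3
    have hAy : (A : ℤ) = (y : ℤ) - v := by linarith [hyA]
    have heq : (((y - 1) + r : ℕ) : ℤ) - (A : ℤ) = (1 - v) % ((p - 1 : ℕ) : ℤ) - (1 - v) := by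
      push_cast [hy1]
      rw [hr0, hAy]
      ring
    rw [heq]
    exact h2
  have hpowmod : ∀ n : ℕ, (β : ZMod p) ^ n = (β : ZMod p) ^ (n % (p - 1)) := by
    intro n
    conv_lhs => rw [← Nat.div_add_mod n (p - 1)]
    rw [pow_add, pow_mul, hβord, one_pow, one_mul]
  have key3 : (β : ZMod p) ^ A = ((X : ℕ) : ZMod p) * (β : ZMod p) ^ r := by
    rw [hXc, ← pow_add, hpowmod A, hpowmod (y - 1 + r)]
    exact congrArg _ hmod
  have hX0 : ((X : ℕ) : ZMod p) ≠ 0 := by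
    rw [hXc]; exact pow_ne_zero _ hβ0
  -- assembly
  have main : ((X : ℕ) : ZMod p) * (((X' : ℕ) : ZMod p) * ((β : ZMod p) ^ r * (β : ZMod p) ^ m)) =
      ((X : ℕ) : ZMod p) * ((((X : ℕ) : ZMod p)) ^ t * ((β : ZMod p) ^ r) ^ t) := by
    calc ((X : ℕ) : ZMod p) * (((X' : ℕ) : ZMod p) * ((β : ZMod p) ^ r * (β : ZMod p) ^ m))
        = (((X' : ℕ) : ZMod p) * (((X : ℕ) : ZMod p) * (β : ZMod p) ^ r)) * (β : ZMod p) ^ m := by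
          ring
      _ = (((X' : ℕ) : ZMod p) * (β : ZMod p) ^ A) * (β : ZMod p) ^ m := by rw [← key3]
      _ = (((X : ℕ) : ZMod p) * (β : ZMod p) ^ A') * (β : ZMod p) ^ m := by rw [key1]
      _ = ((X : ℕ) : ZMod p) * ((β : ZMod p) ^ m * (β : ZMod p) ^ A') := by ring
      _ = ((X : ℕ) : ZMod p) * ((β : ZMod p) ^ A) ^ t := by rw [← key2]
      _ = ((X : ℕ) : ZMod p) * (((X : ℕ) : ZMod p) * (β : ZMod p) ^ r) ^ t := by rw [key3]
      _ = ((X : ℕ) : ZMod p) * ((((X : ℕ) : ZMod p)) ^ t * ((β : ZMod p) ^ r) ^ t) := by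
          rw [mul_pow]
  have main2 : ((X' : ℕ) : ZMod p) * ((β : ZMod p) ^ r * (β : ZMod p) ^ m) =
      (((X : ℕ) : ZMod p)) ^ t * ((β : ZMod p) ^ r) ^ t :=
    mul_left_cancel₀ hX0 main
  -- translate to the required form
  have hXx : ((X : ℕ) : ZMod p) = (((x : ℤ) + u : ℤ) : ZMod p) := by
    rw [← hyX]
    simp
  have hX'x : ((X' : ℕ) : ZMod p) = ((X : ℕ) : ZMod p) + (d : ZMod p) := by
    rw [hXX']
    push_cast
    ring
  rw [pow_add, pow_mul, ← hXx, ← hX'x]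
  exact main2



lemma sols_subset (p α β : ℕ) (u v : ℤ) : sols p α β u v ⊆ Finset.Icc 1 (p - 1) := by
  classical
  intro x hx
  simp only [sols, Finset.mem_filter] at hx
  exact hx.1

lemma card_pairs (p α β : ℕ) (u v : ℤ) (hp : p.Prime) (hp5 : 5 ≤ p)
    (hβ : orderOf ((β : ZMod p)) = p - 1) (hα2 : 2 ≤ α) (d : ℕ) (hd : 1 ≤ d) :
    ((sols p α β u v).filter (fun x => x + d ∈ sols p α β u v)).card ≤ α ^ d * α ^ d := by
  classical
  haveI : Fact p.Prime := ⟨hp⟩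
  have hp0 : 0 < p := hp.pos
  set t : ℕ := α ^ d with ht
  have ht2 : 2 ≤ t := by
    calc (2:ℕ) = 2 ^ 1 := by norm_num
    _ ≤ 2 ^ d := Nat.pow_le_pow_right (by norm_num) hd
    _ ≤ α ^ d := Nat.pow_le_pow_left hα2 d
  set r : ℕ := ((1 - v) % ((p - 1 : ℕ) : ℤ)).toNat with hr
  have hβord : (β : ZMod p) ^ (p - 1) = 1 := by
    rw [← hβ]; exact pow_orderOf_eq_one _
  have hβ0 : (β : ZMod p) ≠ 0 := by
    intro h
    rw [h, zero_pow (by omega : p - 1 ≠ 0)] at hβord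
    exact zero_ne_one hβord
  set S := (sols p α β u v).filter (fun x => x + d ∈ sols p α β u v) with hS
  have hfib : ∀ x ∈ S, t * (α ^ (x - 1) % p) / p ∈ Finset.range t := by
    intro x _
    simp only [Finset.mem_range]
    apply Nat.div_lt_of_lt_mul
    calc t * (α ^ (x - 1) % p) < t * p :=
          (Nat.mul_lt_mul_left (by omega)).mpr (Nat.mod_lt _ hp0)
      _ = p * t := mul_comm _ _
  rw [Finset.card_eq_sum_card_fiberwise hfib]
  have hbound : ∀ i ∈ Finset.range t,
      (S.filter (fun x => t * (α ^ (x - 1) % p) / p = i)).card ≤ t := by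
    intro i _
    set P : Polynomial (ZMod p) :=
      Polynomial.C ((β : ZMod p) ^ (r * t)) * Polynomial.X ^ t -
      Polynomial.C ((β : ZMod p) ^ (r + i)) * Polynomial.X -
      Polynomial.C ((d : ZMod p) * (β : ZMod p) ^ (r + i)) with hP
    have hcoeff : P.coeff t = (β : ZMod p) ^ (r * t) := by
      simp only [hP, Polynomial.coeff_sub, Polynomial.coeff_C_mul, Polynomial.coeff_X_pow,
        Polynomial.coeff_C, Polynomial.coeff_X]
      rw [if_neg (by omega : ¬ (1:ℕ) = t), if_neg (by omega : ¬ t = 0)]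
      simp
    have hP0 : P ≠ 0 := by
      intro h
      rw [h, Polynomial.coeff_zero] at hcoeff
      exact pow_ne_zero _ hβ0 hcoeff.symm
    have hdeg : P.natDegree ≤ t := by
      refine le_trans (Polynomial.natDegree_sub_le _ _) (max_le ?_ ?_)
      · refine le_trans (Polynomial.natDegree_sub_le _ _) (max_le ?_ ?_)
        · exact le_trans (Polynomial.natDegree_C_mul_le _ _) (le_of_eq (Polynomial.natDegree_X_pow t))
        · exact le_trans (Polynomial.natDegree_C_mul_le _ _)
            (le_trans (le_of_eq Polynomial.natDegree_X) (by omega))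
      · rw [Polynomial.natDegree_C]; omega
    have hroots : ∀ x ∈ S.filter (fun x => t * (α ^ (x - 1) % p) / p = i),
        (((x : ℤ) + u : ℤ) : ZMod p) ∈ P.roots.toFinset := by
      intro x hx
      simp only [Finset.mem_filter, hS] at hx
      obtain ⟨⟨hx1, hx2⟩, hmi⟩ := hx
      have hE := pair_eq p α β u v hp hp5 hβ hα2 x d hd hx1 hx2
      rw [hmi] at hE
      rw [Multiset.mem_toFinset, Polynomial.mem_roots']
      refine ⟨hP0, ?_⟩
      simp only [Polynomial.IsRoot, hP, Polynomial.eval_sub, Polynomial.eval_mul,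
        Polynomial.eval_C, Polynomial.eval_pow, Polynomial.eval_X]
      linear_combination -hE
    have hinj : Set.InjOn (fun x : ℕ => (((x : ℤ) + u : ℤ) : ZMod p))
        (S.filter (fun x => t * (α ^ (x - 1) % p) / p = i)) := by
      intro x1 hx1 x2 hx2 hW
      simp only [Finset.coe_filter, Set.mem_setOf_eq, hS, Finset.mem_filter] at hx1 hx2
      have hm1 := sols_subset p α β u v hx1.1.1
      have hm2 := sols_subset p α β u v hx2.1.1
      simp only [Finset.mem_Icc] at hm1 hm2
      have hcast : (((x1 : ℤ) - (x2 : ℤ) : ℤ) : ZMod p) = 0 := by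
        push_cast
        push_cast at hW
        rw [sub_eq_zero]
        linear_combination hW
      rw [ZMod.intCast_zmod_eq_zero_iff_dvd] at hcast
      have habs : (x1 : ℤ) - (x2 : ℤ) = 0 := by
        refine Int.eq_zero_of_abs_lt_dvd hcast ?_
        rw [abs_sub_lt_iff]
        omega
      omega
    calc (S.filter (fun x => t * (α ^ (x - 1) % p) / p = i)).card
        ≤ P.roots.toFinset.card := Finset.card_le_card_of_injOn _ hroots hinj
      _ ≤ Multiset.card P.roots := Multiset.toFinset_card_le _
      _ ≤ P.natDegree := Polynomial.card_roots' P
      _ ≤ t := hdeg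
  calc ∑ i ∈ Finset.range t, (S.filter (fun x => t * (α ^ (x - 1) % p) / p = i)).card
      ≤ ∑ i ∈ Finset.range t, t := Finset.sum_le_sum hbound
    _ = t * t := by rw [Finset.sum_const, Finset.card_range, smul_eq_mul]

lemma count_master (p α β : ℕ) (u v : ℤ) (hp : p.Prime) (hp5 : 5 ≤ p)
    (hβ : orderOf ((β : ZMod p)) = p - 1) (hα2 : 2 ≤ α) (k : ℕ) (hk : 1 ≤ k) :
    (sols p α β u v).card ≤ 1 + (p - 2) / (k + 1) + ∑ d ∈ Finset.Icc 1 k, α ^ d * α ^ d := by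
  classical
  set Xs := sols p α β u v with hXs
  have hsplit := Finset.card_filter_add_card_filter_not
    (s := Xs) (p := fun x => ∃ d ∈ Finset.Icc 1 k, x + d ∈ Xs)
  set Near := Xs.filter (fun x => ∃ d ∈ Finset.Icc 1 k, x + d ∈ Xs) with hNear
  set Far := Xs.filter (fun x => ¬ ∃ d ∈ Finset.Icc 1 k, x + d ∈ Xs) with hFar
  have hnear : Near.card ≤ ∑ d ∈ Finset.Icc 1 k, α ^ d * α ^ d := by
    have hsub : Near ⊆ (Finset.Icc 1 k).biUnion (fun d => Xs.filter (fun x => x + d ∈ Xs)) := by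
      intro x hx
      simp only [hNear, Finset.mem_filter] at hx
      obtain ⟨hx1, d, hd1, hd2⟩ := hx
      simp only [Finset.mem_biUnion]
      exact ⟨d, hd1, Finset.mem_filter.mpr ⟨hx1, hd2⟩⟩
    calc Near.card ≤ _ := Finset.card_le_card hsub
      _ ≤ ∑ d ∈ Finset.Icc 1 k, (Xs.filter (fun x => x + d ∈ Xs)).card :=
          Finset.card_biUnion_le
      _ ≤ ∑ d ∈ Finset.Icc 1 k, α ^ d * α ^ d := by
          apply Finset.sum_le_sum
          intro d hd
          exact card_pairs p α β u v hp hp5 hβ hα2 d (Finset.mem_Icc.mp hd).1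
  have hfar : Far.card ≤ (p - 2) / (k + 1) + 1 := by
    have hsep : ∀ x1 ∈ Far, ∀ x2 ∈ Far, x1 < x2 → x1 + k + 1 ≤ x2 := by
      intro x1 hx1 x2 hx2 hlt
      by_contra hcon
      simp only [hFar, Finset.mem_filter] at hx1 hx2
      apply hx1.2
      refine ⟨x2 - x1, Finset.mem_Icc.mpr ⟨by omega, by omega⟩, ?_⟩
      have : x1 + (x2 - x1) = x2 := by omega
      rw [this]
      exact hx2.1
    have hmaps : ∀ x ∈ Far, (x - 1) / (k + 1) ∈ Finset.range ((p - 2) / (k + 1) + 1) := by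
      intro x hx
      have hxI : x ∈ Finset.Icc 1 (p - 1) := sols_subset p α β u v (Finset.mem_filter.mp hx).1
      simp only [Finset.mem_Icc] at hxI
      simp only [Finset.mem_range]
      have : (x - 1) / (k + 1) ≤ (p - 2) / (k + 1) := Nat.div_le_div_right (by omega)
      omega
    have hinj : Set.InjOn (fun x : ℕ => (x - 1) / (k + 1)) Far := by
      intro x1 hx1 x2 hx2 heq
      have heq' : (x1 - 1) / (k + 1) = (x2 - 1) / (k + 1) := heq
      simp only [Finset.mem_coe] at hx1 hx2
      by_contra hne
      rcases Nat.lt_or_ge x1 x2 with h | h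
      · have hs := hsep x1 hx1 x2 hx2 h
        have hx1I : x1 ∈ Finset.Icc 1 (p - 1) := sols_subset p α β u v (Finset.mem_filter.mp hx1).1
        simp only [Finset.mem_Icc] at hx1I
        have h2 : (x1 - 1) / (k + 1) + 1 ≤ (x2 - 1) / (k + 1) := by
          have h3 : ((x1 - 1) + (k + 1)) / (k + 1) = (x1 - 1) / (k + 1) + 1 :=
            Nat.add_div_right _ (by omega)
          have h4 : (x1 - 1) + (k + 1) ≤ x2 - 1 := by omega
          rw [← h3]
          exact Nat.div_le_div_right h4
        omega
      · have hlt : x2 < x1 := by omega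
        have hs := hsep x2 hx2 x1 hx1 hlt
        have hx2I : x2 ∈ Finset.Icc 1 (p - 1) := sols_subset p α β u v (Finset.mem_filter.mp hx2).1
        simp only [Finset.mem_Icc] at hx2I
        have h2 : (x2 - 1) / (k + 1) + 1 ≤ (x1 - 1) / (k + 1) := by
          have h3 : ((x2 - 1) + (k + 1)) / (k + 1) = (x2 - 1) / (k + 1) + 1 :=
            Nat.add_div_right _ (by omega)
          have h4 : (x2 - 1) + (k + 1) ≤ x1 - 1 := by omega
          rw [← h3]
          exact Nat.div_le_div_right h4
        omega
    calc Far.card ≤ (Finset.range ((p - 2) / (k + 1) + 1)).card :=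
          Finset.card_le_card_of_injOn _ hmaps hinj
      _ = (p - 2) / (k + 1) + 1 := Finset.card_range _
  omega

lemma two_le_of_order (p γ : ℕ) (hp : p.Prime) (hp5 : 5 ≤ p)
    (hγ : orderOf ((γ : ZMod p)) = p - 1) : 2 ≤ γ := by
  haveI : Fact p.Prime := ⟨hp⟩
  by_contra h
  interval_cases γ
  · rw [Nat.cast_zero] at hγ
    have h1 := pow_orderOf_eq_one (0 : ZMod p)
    rw [hγ, zero_pow (by omega : p - 1 ≠ 0)] at h1
    exact zero_ne_one h1
  · rw [Nat.cast_one, orderOf_one] at hγ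
    omega

lemma geom_bound (α : ℕ) (hα2 : 2 ≤ α) (k : ℕ) (hk : 1 ≤ k) :
    3 * ∑ d ∈ Finset.Icc 1 k, α ^ d * α ^ d ≤ 4 * α ^ (2 * k) := by
  induction k with
  | zero => omega
  | succ n ih =>
    rcases Nat.eq_or_lt_of_le hk with h1 | h1
    · rw [← h1]
      rw [Finset.Icc_self, Finset.sum_singleton]
      have : α ^ 1 * α ^ 1 = α ^ (2 * 1) := by ring
      rw [this]
      omega
    · have hn : 1 ≤ n := by omega
      have ihn := ih hn
      rw [Finset.sum_Icc_succ_top (by omega : 1 ≤ n + 1), Nat.mul_add]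
      have h2 : 3 * (α ^ (n + 1) * α ^ (n + 1)) = 3 * α ^ (2 * n) * α ^ 2 := by ring
      have h3 : 4 * α ^ (2 * (n + 1)) = 4 * α ^ (2 * n) * α ^ 2 := by ring
      have h4 : 4 * α ^ (2 * n) ≤ α ^ (2 * n) * α ^ 2 := by
        have : 4 ≤ α ^ 2 := by nlinarith
        nlinarith [pow_pos (by omega : 0 < α) (2 * n)]
      nlinarith [pow_pos (by omega : 0 < α) (2 * n), pow_pos (by omega : 0 < α) 2]

lemma four_mul_le_two_pow (k : ℕ) (hk : 5 ≤ k) : 4 * (k + 1) ≤ 2 ^ k := by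
  induction k with
  | zero => omega
  | succ n ih =>
    rcases Nat.eq_or_lt_of_le hk with h1 | h1
    · rw [← h1]; norm_num
    · have := ih (by omega)
      rw [pow_succ]
      omega

lemma four_mul_le_three_pow (k : ℕ) (hk : 3 ≤ k) : 4 * (k + 1) ≤ 3 ^ k := by
  induction k with
  | zero => omega
  | succ n ih =>
    rcases Nat.eq_or_lt_of_le hk with h1 | h1
    · rw [← h1]; norm_num
    · have := ih (by omega)
      rw [pow_succ]
      omega

lemma D_of_U (α k r : ℕ) (hα2 : 2 ≤ α) (hr : r ≤ 2) (hU : 4 * (k + 1) ≤ α ^ k) :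
    4 * (3 * k + r + 1) * (k + 1) ≤ 3 * ((k + 3 - r) * α ^ (k + r)) := by
  calc 4 * (3 * k + r + 1) * (k + 1) ≤ 4 * (3 * k + 3) * (k + 1) := by
        apply Nat.mul_le_mul_right
        apply Nat.mul_le_mul_left
        omega
    _ = 3 * (k + 1) * (4 * (k + 1)) := by ring
    _ ≤ 3 * (k + 1) * α ^ k := Nat.mul_le_mul_left _ hU
    _ ≤ 3 * ((k + 3 - r) * α ^ (k + r)) := by
        rw [mul_assoc]
        apply Nat.mul_le_mul_left
        apply Nat.mul_le_mul
        · omega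
        · exact Nat.pow_le_pow_right (by omega) (by omega)

lemma Gp_of_D (α k r : ℕ) (hα2 : 2 ≤ α) (hk : 1 ≤ k) (hr : r ≤ 2)
    (hD : 4 * (3 * k + r + 1) * (k + 1) ≤ 3 * ((k + 3 - r) * α ^ (k + r))) :
    (3 * k + r + 1) * (k + 1) * (∑ d ∈ Finset.Icc 1 k, α ^ d * α ^ d) +
      (3 * k + r + 1) * α ^ (3 * k + r) ≤ 4 * (k + 1) * α ^ (3 * k + r) := by
  have hgeom := geom_bound α hα2 k hk
  have h1 : 3 * ((3 * k + r + 1) * (k + 1) * (∑ d ∈ Finset.Icc 1 k, α ^ d * α ^ d)) ≤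
      3 * ((k + 3 - r) * α ^ (3 * k + r)) := by
    calc 3 * ((3 * k + r + 1) * (k + 1) * (∑ d ∈ Finset.Icc 1 k, α ^ d * α ^ d))
        = (3 * k + r + 1) * (k + 1) * (3 * ∑ d ∈ Finset.Icc 1 k, α ^ d * α ^ d) := by ring
      _ ≤ (3 * k + r + 1) * (k + 1) * (4 * α ^ (2 * k)) := Nat.mul_le_mul_left _ hgeom
      _ = (4 * (3 * k + r + 1) * (k + 1)) * α ^ (2 * k) := by ring
      _ ≤ (3 * ((k + 3 - r) * α ^ (k + r))) * α ^ (2 * k) := Nat.mul_le_mul_right _ hD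
      _ = 3 * ((k + 3 - r) * α ^ (3 * k + r)) := by
          rw [mul_assoc, mul_assoc, ← pow_add]
          congr 3
          omega
  have h2 : (3 * k + r + 1) * (k + 1) * (∑ d ∈ Finset.Icc 1 k, α ^ d * α ^ d) ≤
      (k + 3 - r) * α ^ (3 * k + r) := Nat.le_of_mul_le_mul_left h1 (by omega)
  have h3 : (k + 3 - r) * α ^ (3 * k + r) + (3 * k + r + 1) * α ^ (3 * k + r) =
      4 * (k + 1) * α ^ (3 * k + r) := by
    rw [← Nat.add_mul]
    congr 1
    omega
  omega

lemma sum1 (α : ℕ) : ∑ d ∈ Finset.Icc 1 1, α ^ d * α ^ d = α ^ 1 * α ^ 1 := by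
  rw [Finset.Icc_self, Finset.sum_singleton]

lemma sum2 (α : ℕ) : ∑ d ∈ Finset.Icc 1 2, α ^ d * α ^ d = α ^ 1 * α ^ 1 + α ^ 2 * α ^ 2 := by
  rw [show (2:ℕ) = 1 + 1 from rfl, Finset.sum_Icc_succ_top (by omega), sum1]

lemma sum3 (α : ℕ) : ∑ d ∈ Finset.Icc 1 3, α ^ d * α ^ d =
    α ^ 1 * α ^ 1 + α ^ 2 * α ^ 2 + α ^ 3 * α ^ 3 := by
  rw [show (3:ℕ) = 2 + 1 from rfl, Finset.sum_Icc_succ_top (by omega), sum2]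

lemma choose_k (α j : ℕ) (hα2 : 2 ≤ α) (hj : 4 ≤ j) :
    ∃ k, 1 ≤ k ∧ j + 1 ≤ 4 * (k + 1) ∧
      (j + 1) * (k + 1) * (∑ d ∈ Finset.Icc 1 k, α ^ d * α ^ d) + (j + 1) * α ^ j ≤
        4 * (k + 1) * α ^ j := by
  by_cases hα : α = 2
  · subst hα
    rcases Nat.lt_or_ge j 15 with hj15 | hj15
    · interval_cases j
      · exact ⟨1, by omega, by omega, by rw [sum1]; norm_num⟩
      · exact ⟨1, by omega, by omega, by rw [sum1]; norm_num⟩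
      · exact ⟨1, by omega, by omega, by rw [sum1]; norm_num⟩
      · exact ⟨2, by omega, by omega, by rw [sum2]; norm_num⟩
      · exact ⟨2, by omega, by omega, by rw [sum2]; norm_num⟩
      · exact ⟨2, by omega, by omega, by rw [sum2]; norm_num⟩
      · exact ⟨3, by omega, by omega, by rw [sum3]; norm_num⟩
      · exact ⟨3, by omega, by omega, by rw [sum3]; norm_num⟩
      · exact ⟨4, by omega, by omega, by
          rw [show (4:ℕ) = 3 + 1 from rfl, Finset.sum_Icc_succ_top (by omega), sum3]; norm_num⟩
      · exact ⟨4, by omega, by omega, by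
          rw [show (4:ℕ) = 3 + 1 from rfl, Finset.sum_Icc_succ_top (by omega), sum3]; norm_num⟩
      · exact ⟨4, by omega, by omega, by
          rw [show (4:ℕ) = 3 + 1 from rfl, Finset.sum_Icc_succ_top (by omega), sum3]; norm_num⟩
    · refine ⟨j / 3, by omega, by omega, ?_⟩
      have hjd : j = 3 * (j / 3) + j % 3 := by omega
      have hr : j % 3 ≤ 2 := by omega
      have hk5 : 5 ≤ j / 3 := by omega
      have hD := D_of_U 2 (j / 3) (j % 3) (by omega) hr (four_mul_le_two_pow _ hk5)
      have := Gp_of_D 2 (j / 3) (j % 3) (by omega) (by omega) hr hD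
      rw [← hjd] at this
      exact this
  · have hα3 : 3 ≤ α := by omega
    refine ⟨j / 3, by omega, by omega, ?_⟩
    have hjd : j = 3 * (j / 3) + j % 3 := by omega
    have hr : j % 3 ≤ 2 := by omega
    have hk1 : 1 ≤ j / 3 := by omega
    have hD : 4 * (3 * (j / 3) + j % 3 + 1) * (j / 3 + 1) ≤
        3 * ((j / 3 + 3 - j % 3) * α ^ (j / 3 + j % 3)) := by
      rcases Nat.lt_or_ge (j / 3) 3 with hk3 | hk3
      · -- k = 1 or 2, case on r
        have hαp1 : 3 ≤ α ^ 1 := by simpa using hα3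
        have hαp2 : 9 ≤ α ^ 2 := by nlinarith
        have hαp3 : 27 ≤ α ^ 3 := by nlinarith
        have hαp4 : 81 ≤ α ^ 4 := by nlinarith
        interval_cases h : (j / 3)
        · interval_cases h2 : (j % 3)
          · calc 4 * (3 * 1 + 0 + 1) * (1 + 1) = 32 := by norm_num
              _ ≤ 3 * ((1 + 3 - 0) * α ^ (1 + 0)) := by
                  have : 3 * ((1 + 3 - 0) * α ^ (1 + 0)) = 12 * α ^ 1 := by ring
                  omega
          · calc 4 * (3 * 1 + 1 + 1) * (1 + 1) = 40 := by norm_num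
              _ ≤ 3 * ((1 + 3 - 1) * α ^ (1 + 1)) := by
                  have : 3 * ((1 + 3 - 1) * α ^ (1 + 1)) = 9 * α ^ 2 := by ring
                  omega
          · calc 4 * (3 * 1 + 2 + 1) * (1 + 1) = 48 := by norm_num
              _ ≤ 3 * ((1 + 3 - 2) * α ^ (1 + 2)) := by
                  have : 3 * ((1 + 3 - 2) * α ^ (1 + 2)) = 6 * α ^ 3 := by ring
                  omega
        · interval_cases h2 : (j % 3)
          · calc 4 * (3 * 2 + 0 + 1) * (2 + 1) = 84 := by norm_num
              _ ≤ 3 * ((2 + 3 - 0) * α ^ (2 + 0)) := by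
                  have : 3 * ((2 + 3 - 0) * α ^ (2 + 0)) = 15 * α ^ 2 := by ring
                  omega
          · calc 4 * (3 * 2 + 1 + 1) * (2 + 1) = 96 := by norm_num
              _ ≤ 3 * ((2 + 3 - 1) * α ^ (2 + 1)) := by
                  have : 3 * ((2 + 3 - 1) * α ^ (2 + 1)) = 12 * α ^ 3 := by ring
                  omega
          · calc 4 * (3 * 2 + 2 + 1) * (2 + 1) = 108 := by norm_num
              _ ≤ 3 * ((2 + 3 - 2) * α ^ (2 + 2)) := by
                  have : 3 * ((2 + 3 - 2) * α ^ (2 + 2)) = 9 * α ^ 4 := by ring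
                  omega
      · exact D_of_U α (j / 3) (j % 3) (by omega) hr
          (le_trans (four_mul_le_three_pow _ hk3) (Nat.pow_le_pow_left hα3 _))
    have := Gp_of_D α (j / 3) (j % 3) (by omega) hk1 hr hD
    rw [← hjd] at this
    exact this

end Costas

/-- Bound on the cross-correlation between an exponential Welch Costas array (generated by α)
and a logarithmic Welch Costas array (generated by β) at shift (u,v). -/
theorem stmt_17 (p α β : ℕ) (hp : p.Prime) (hp5 : 5 ≤ p)
    (hαp : α ≤ p - 1) (hβp : β ≤ p - 1)
    (hα : orderOf ((α : ZMod p)) = p - 1) (hβ : orderOf ((β : ZMod p)) = p - 1)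
    (u v : ℤ) :
    ((((Finset.Icc 1 (p - 1)) ×ˢ (Finset.Icc 1 (p - 1))).filter (fun xy : ℕ × ℕ =>
        (xy.2 : ℤ) = ((α ^ (xy.1 - 1) % p : ℕ) : ℤ) + v ∧
        ((β ^ (xy.2 - 1) % p : ℕ) : ℤ) = (xy.1 : ℤ) + u)).card : ℝ) ≤
      4 * p * (Real.log α / Real.log p) + 1 := by
  classical
  haveI : Fact p.Prime := ⟨hp⟩
  have hα2 := Costas.two_le_of_order p α hp hp5 hα
  have hNle := Costas.card_main_le p α β u v
  have hp1R : (1:ℝ) < (p:ℝ) := by exact_mod_cast hp.one_lt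
  have hlogp : 0 < Real.log p := Real.log_pos hp1R
  have hloga : 0 < Real.log α := Real.log_pos (by exact_mod_cast hα2)
  have hNR : ((((Finset.Icc 1 (p - 1)) ×ˢ (Finset.Icc 1 (p - 1))).filter (fun xy : ℕ × ℕ =>
        (xy.2 : ℤ) = ((α ^ (xy.1 - 1) % p : ℕ) : ℤ) + v ∧
        ((β ^ (xy.2 - 1) % p : ℕ) : ℤ) = (xy.1 : ℤ) + u)).card : ℝ) ≤
      ((Costas.sols p α β u v).card : ℝ) := by exact_mod_cast hNle
  rcases le_or_gt p (α ^ 4) with h4 | h4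
  · -- trivial case : α^4 ≥ p
    have h1 : (Costas.sols p α β u v).card ≤ p - 1 := by
      calc (Costas.sols p α β u v).card ≤ (Finset.Icc 1 (p-1)).card :=
            Finset.card_le_card (Costas.sols_subset p α β u v)
        _ = p - 1 := by rw [Nat.card_Icc]; omega
    have hlog4 : Real.log p ≤ 4 * Real.log α := by
      calc Real.log p ≤ Real.log ((α:ℝ) ^ (4:ℕ)) := by
            apply Real.log_le_log (by positivity)
            exact_mod_cast h4
        _ = 4 * Real.log α := by rw [Real.log_pow]; push_cast; ring
    have h5 : (1:ℝ) ≤ 4 * Real.log α / Real.log p := by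
      rw [le_div_iff₀ hlogp]; linarith
    have h6 : (p:ℝ) ≤ 4 * p * (Real.log α / Real.log p) := by
      calc (p:ℝ) = p * 1 := by ring
        _ ≤ p * (4 * Real.log α / Real.log p) := by
            apply mul_le_mul_of_nonneg_left h5 (by positivity)
        _ = 4 * p * (Real.log α / Real.log p) := by ring
    have h7 : ((Costas.sols p α β u v).card : ℝ) ≤ (p:ℝ) - 1 := by
      have := Nat.cast_le (α := ℝ) |>.mpr h1
      rw [Nat.cast_sub (by omega : 1 ≤ p)] at this
      simpa using this
    linarith
  · -- main case
    set j := Nat.log α p with hj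
    have hαj : α ^ j ≤ p := Nat.pow_log_le_self α (by omega)
    have hjp : p < α ^ (j + 1) := Nat.lt_pow_succ_log_self (by omega) p
    have hj4 : 4 ≤ j := (Nat.le_log_iff_pow_le (by omega) (by omega)).mpr h4.le
    obtain ⟨k, hk1, hN1, hG⟩ := Costas.choose_k α j hα2 hj4
    set Sk := ∑ d ∈ Finset.Icc 1 k, α ^ d * α ^ d with hSk
    have hM : (j + 1) * (k + 1) * Sk + (j + 1) * p ≤ 4 * (k + 1) * p := by
      have h1 : (j + 1) * (k + 1) * Sk ≤ (4 * (k + 1) - (j + 1)) * α ^ j := by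
        rw [Nat.sub_mul]
        omega
      have h3 : (j + 1) * (k + 1) * Sk ≤ (4 * (k + 1) - (j + 1)) * p :=
        le_trans h1 (Nat.mul_le_mul_left _ hαj)
      have h4' : (4 * (k + 1) - (j + 1)) * p + (j + 1) * p = 4 * (k + 1) * p := by
        rw [← Nat.add_mul]
        congr 1
        omega
      omega
    have hcm := Costas.count_master p α β u v hp hp5 hβ hα2 k hk1
    have hk0 : (0:ℝ) < (k:ℝ) + 1 := by positivity
    have hj0 : (0:ℝ) < (j:ℝ) + 1 := by positivity
    have hMR : ((j:ℝ) + 1) * ((k:ℝ) + 1) * (Sk:ℝ) + ((j:ℝ) + 1) * p ≤ 4 * ((k:ℝ) + 1) * p := by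
      exact_mod_cast hM
    have hcast1 : ((Costas.sols p α β u v).card : ℝ) ≤
        1 + ((p:ℝ) - 2) / ((k:ℝ) + 1) + (Sk:ℝ) := by
      have hc2 : ((Costas.sols p α β u v).card : ℝ) ≤
          1 + (((p - 2) / (k + 1) : ℕ) : ℝ) + (Sk:ℝ) := by exact_mod_cast hcm
      have hc3 : (((p - 2) / (k + 1) : ℕ) : ℝ) ≤ ((p - 2 : ℕ):ℝ) / (((k + 1 : ℕ)):ℝ) :=
        Nat.cast_div_le
      have hc4 : ((p - 2 : ℕ):ℝ) = (p:ℝ) - 2 := by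
        rw [Nat.cast_sub (by omega : 2 ≤ p)]; norm_num
      rw [hc4] at hc3
      push_cast at hc3
      linarith
    have hfrac : ((p:ℝ) - 2) / ((k:ℝ) + 1) + (Sk:ℝ) ≤ 4 * p / ((j:ℝ) + 1) := by
      rw [div_add' _ _ _ (ne_of_gt hk0), div_le_div_iff₀ hk0 hj0]
      have hp2 : (2:ℝ) ≤ p := by exact_mod_cast (by omega : 2 ≤ p)
      nlinarith [hMR]
    have hlog : 4 * (p:ℝ) / ((j:ℝ) + 1) ≤ 4 * p * (Real.log α / Real.log p) := by
      have hlogle : Real.log p ≤ ((j:ℝ) + 1) * Real.log α := by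
        calc Real.log p ≤ Real.log ((α:ℝ) ^ (j + 1)) := by
              apply Real.log_le_log (by positivity)
              exact_mod_cast hjp.le
          _ = ((j:ℝ) + 1) * Real.log α := by rw [Real.log_pow]; push_cast; ring
      have h1 : (1:ℝ) / ((j:ℝ) + 1) ≤ Real.log α / Real.log p := by
        rw [div_le_div_iff₀ hj0 hlogp]; linarith
      calc 4 * (p:ℝ) / ((j:ℝ) + 1) = 4 * p * (1 / ((j:ℝ) + 1)) := by ring
        _ ≤ 4 * p * (Real.log α / Real.log p) := by
            apply mul_le_mul_of_nonneg_left h1 (by positivity)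
    linarith
end

section
/- Let n ≥ 4 and let A, B be permutation matrices of two distinct Costas arrays of order n. Then the maximal cross-correlation max over (u,v) of Ψ_{A,B}(u,v) is at least 2. -/
/-- Cross-correlation Ψ between permutations f and g of {1,...,n} at shift (u,v):
the number of i with i, i+u ∈ {1,...,n} and g(i+u) = f(i) + v. -/
noncomputable def crossCorr (n : ℕ) (f g : ℕ → ℕ) (u v : ℤ) : ℕ :=
  ((Finset.Icc 1 n).filter (fun i : ℕ =>
    ((i : ℤ) + u) ∈ Finset.Icc (1 : ℤ) (n : ℤ) ∧
    ((g (((i : ℤ) + u).toNat) : ℤ) = (f i : ℤ) + v))).card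

/-- A Costas array of order n: a permutation of {1,...,n} whose aperiodic auto-correlation
is at most 1 away from the origin. -/
def IsCostas (n : ℕ) (f : ℕ → ℕ) : Prop :=
  Set.BijOn f (Set.Icc 1 n) (Set.Icc 1 n) ∧
    ∀ u v : ℤ, (u, v) ≠ (0, 0) → crossCorr n f f u v ≤ 1



private lemma two_le_card2 {α : Type*} {s : Finset α} {a b : α}
    (ha : a ∈ s) (hb : b ∈ s) (hab : a ≠ b) : 2 ≤ s.card :=
  Finset.one_lt_card.mpr ⟨a, ha, b, hb, hab⟩

private lemma row_surj (m : ℕ) (F G : ℕ → ℤ)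
    (hFb : ∀ q, 1 ≤ q → q ≤ m → F q ≠ 0 ∧ -(m:ℤ) ≤ F q ∧ F q ≤ m)
    (hGb : ∀ q, 1 ≤ q → q ≤ m → G q ≠ 0 ∧ -(m:ℤ) ≤ G q ∧ G q ≤ m)
    (hFF : ∀ q r, 1 ≤ q → q ≤ m → 1 ≤ r → r ≤ m → F q = F r → q = r)
    (hGG : ∀ q r, 1 ≤ q → q ≤ m → 1 ≤ r → r ≤ m → G q = G r → q = r)
    (hFG : ∀ q r, 1 ≤ q → q ≤ m → 1 ≤ r → r ≤ m → F q ≠ G r)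
    (w : ℤ) (hw : w ≠ 0) (hw1 : -(m:ℤ) ≤ w) (hw2 : w ≤ m) :
    (∃ q, 1 ≤ q ∧ q ≤ m ∧ F q = w) ∨ (∃ q, 1 ≤ q ∧ q ≤ m ∧ G q = w) := by
  classical
  set T : Finset ℤ := (Finset.Icc (-(m:ℤ)) m).erase 0 with hT
  set D : Finset (ℕ × Bool) := (Finset.Icc 1 m) ×ˢ (Finset.univ : Finset Bool) with hD
  set φ : ℕ × Bool → ℤ := fun p => if p.2 then F p.1 else G p.1 with hφ
  have hmaps : ∀ p ∈ D, φ p ∈ T := by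
    rintro ⟨q, t⟩ hp
    simp only [hD, Finset.mem_product, Finset.mem_Icc] at hp
    rcases t with _ | _
    · have := hGb q hp.1.1 hp.1.2
      simp only [hφ, hT, Finset.mem_erase, Finset.mem_Icc]
      exact ⟨this.1, this.2.1, this.2.2⟩
    · have := hFb q hp.1.1 hp.1.2
      simp only [hφ, hT, Finset.mem_erase, Finset.mem_Icc]
      exact ⟨this.1, this.2.1, this.2.2⟩
  have hinj : Set.InjOn φ ↑D := by
    rintro ⟨q, t⟩ hq ⟨r, s⟩ hr heq
    simp only [Finset.coe_product, hD, Set.mem_prod, Finset.mem_coe, Finset.mem_Icc] at hq hr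
    rcases t with _ | _ <;> rcases s with _ | _ <;> simp only [hφ] at heq
    · exact Prod.ext (hGG q r hq.1.1 hq.1.2 hr.1.1 hr.1.2 heq) rfl
    · exact absurd heq.symm (hFG r q hr.1.1 hr.1.2 hq.1.1 hq.1.2)
    · exact absurd heq (hFG q r hq.1.1 hq.1.2 hr.1.1 hr.1.2)
    · exact Prod.ext (hFF q r hq.1.1 hq.1.2 hr.1.1 hr.1.2 heq) rfl
  have hDcard : D.card = 2 * m := by
    simp [hD, Finset.card_product, Nat.card_Icc]; ring
  have hTcard : T.card = 2 * m := by
    rcases Nat.eq_zero_or_pos m with h | h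
    · subst h; simp [hT]
    · have h0 : (0:ℤ) ∈ Finset.Icc (-(m:ℤ)) m := by
        simp only [Finset.mem_Icc]; omega
      rw [hT, Finset.card_erase_of_mem h0, Int.card_Icc]
      omega
  have hsub : D.image φ ⊆ T := by
    intro x hx
    obtain ⟨p, hp, rfl⟩ := Finset.mem_image.mp hx
    exact hmaps p hp
  have himage : D.image φ = T := by
    apply Finset.eq_of_subset_of_card_le hsub
    rw [Finset.card_image_of_injOn hinj, hDcard, hTcard]
  have hwT : w ∈ T := by
    simp only [hT, Finset.mem_erase, Finset.mem_Icc]; exact ⟨hw, hw1, hw2⟩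
  rw [← himage] at hwT
  obtain ⟨⟨q, t⟩, hp, heq⟩ := Finset.mem_image.mp hwT
  simp only [hD, Finset.mem_product, Finset.mem_Icc] at hp
  rcases t with _ | _ <;> simp only [hφ] at heq
  · exact Or.inr ⟨q, hp.1.1, hp.1.2, heq⟩
  · exact Or.inl ⟨q, hp.1.1, hp.1.2, heq⟩

private lemma cross_two (n : ℕ) (f g : ℕ → ℕ) (i j k l : ℕ)
    (hi : 1 ≤ i) (hi2 : i ≤ n) (hj : 1 ≤ j) (hj2 : j ≤ n)
    (hk : 1 ≤ k) (hk2 : k ≤ n) (hl : 1 ≤ l) (hl2 : l ≤ n)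
    (hpos : j + k = i + l) (hval : f j + g k = f i + g l) (hij : i ≠ j) :
    2 ≤ crossCorr n f g ((k:ℤ) - i) ((g k : ℤ) - f i) := by
  have e1 : (i:ℤ) + ((k:ℤ) - i) = ((k:ℕ) : ℤ) := by ring
  have e2 : (j:ℤ) + ((k:ℤ) - i) = ((l:ℕ) : ℤ) := by push_cast; omega
  apply two_le_card2 (a := i) (b := j) _ _ hij
  · simp only [crossCorr, Finset.mem_filter, Finset.mem_Icc, e1, Int.toNat_natCast]
    refine ⟨⟨hi, hi2⟩, ⟨by exact_mod_cast hk, by exact_mod_cast hk2⟩, by ring⟩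
  · simp only [crossCorr, Finset.mem_filter, Finset.mem_Icc, e2, Int.toNat_natCast]
    refine ⟨⟨hj, hj2⟩, ⟨by exact_mod_cast hl, by exact_mod_cast hl2⟩, by push_cast; omega⟩

private lemma costas_core
    (n : ℕ) (f g : ℕ → ℕ) (hn : 4 ≤ n)
    (hfM : ∀ x, 1 ≤ x → x ≤ n → 1 ≤ f x ∧ f x ≤ n)
    (hgM : ∀ x, 1 ≤ x → x ≤ n → 1 ≤ g x ∧ g x ≤ n)
    (hfI : ∀ x y, 1 ≤ x → x ≤ n → 1 ≤ y → y ≤ n → f x = f y → x = y)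
    (hgI : ∀ x y, 1 ≤ x → x ≤ n → 1 ≤ y → y ≤ n → g x = g y → x = y)
    (hCf : ∀ i j k l, 1 ≤ i → i ≤ n → 1 ≤ j → j ≤ n → 1 ≤ k → k ≤ n → 1 ≤ l → l ≤ n →
      j + k = i + l → f j + f k = f i + f l → i = j ∨ i = k)
    (hCg : ∀ i j k l, 1 ≤ i → i ≤ n → 1 ≤ j → j ≤ n → 1 ≤ k → k ≤ n → 1 ≤ l → l ≤ n →
      j + k = i + l → g j + g k = g i + g l → i = j ∨ i = k)
    (hH : ∀ i j k l, 1 ≤ i → i ≤ n → 1 ≤ j → j ≤ n → 1 ≤ k → k ≤ n → 1 ≤ l → l ≤ n →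
      j + k = i + l → f j + g k = f i + g l → i = j)
    (b : ℕ) (hb1 : 1 ≤ b) (hb2 : b + 1 ≤ n) (hfb : f b = 1) (hfb1 : f (b+1) = n) :
    False := by
  -- row-1 surjectivity, ℕ-facing
  have hrow1 := row_surj (n-1) (fun q => (f (q+1) : ℤ) - f q) (fun q => (g (q+1) : ℤ) - g q)
    (by
      intro q h1 h2
      have m1 := hfM q (by omega) (by omega)
      have m2 := hfM (q+1) (by omega) (by omega)
      have hne : f (q+1) ≠ f q := fun he => by
        have := hfI (q+1) q (by omega) (by omega) (by omega) (by omega) he; omega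
      refine ⟨?_, ?_, ?_⟩ <;> push_cast <;> omega)
    (by
      intro q h1 h2
      have m1 := hgM q (by omega) (by omega)
      have m2 := hgM (q+1) (by omega) (by omega)
      have hne : g (q+1) ≠ g q := fun he => by
        have := hgI (q+1) q (by omega) (by omega) (by omega) (by omega) he; omega
      refine ⟨?_, ?_, ?_⟩ <;> push_cast <;> omega)
    (by
      intro q r h1 h2 h3 h4 he
      rcases hCf q (q+1) r (r+1) (by omega) (by omega) (by omega) (by omega) (by omega)
        (by omega) (by omega) (by omega) (by omega) (by omega) with h | h
      · omega
      · exact h)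
    (by
      intro q r h1 h2 h3 h4 he
      rcases hCg q (q+1) r (r+1) (by omega) (by omega) (by omega) (by omega) (by omega)
        (by omega) (by omega) (by omega) (by omega) (by omega) with h | h
      · omega
      · exact h)
    (by
      intro q r h1 h2 h3 h4 he
      have := hH q (q+1) r (r+1) (by omega) (by omega) (by omega) (by omega) (by omega)
        (by omega) (by omega) (by omega) (by omega) (by omega)
      omega)
  have rowP : ∀ w : ℕ, 1 ≤ w → w + 1 ≤ n →
      (∃ q, 1 ≤ q ∧ q + 1 ≤ n ∧ f (q+1) = f q + w) ∨
      (∃ q, 1 ≤ q ∧ q + 1 ≤ n ∧ g (q+1) = g q + w) := by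
    intro w h1 h2
    rcases hrow1 (w:ℤ) (by push_cast; omega) (by push_cast; omega) (by push_cast; omega) with
      ⟨q, a1, a2, a3⟩ | ⟨q, a1, a2, a3⟩
    · have a3' : (f (q+1) : ℤ) - (f q : ℤ) = (w:ℤ) := a3
      exact Or.inl ⟨q, a1, by omega, by omega⟩
    · have a3' : (g (q+1) : ℤ) - (g q : ℤ) = (w:ℤ) := a3
      exact Or.inr ⟨q, a1, by omega, by omega⟩
  have rowN : ∀ w : ℕ, 1 ≤ w → w + 1 ≤ n →
      (∃ q, 1 ≤ q ∧ q + 1 ≤ n ∧ f q = f (q+1) + w) ∨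
      (∃ q, 1 ≤ q ∧ q + 1 ≤ n ∧ g q = g (q+1) + w) := by
    intro w h1 h2
    rcases hrow1 (-(w:ℤ)) (by push_cast; omega) (by push_cast; omega) (by push_cast; omega) with
      ⟨q, a1, a2, a3⟩ | ⟨q, a1, a2, a3⟩
    · have a3' : (f (q+1) : ℤ) - (f q : ℤ) = -(w:ℤ) := a3
      exact Or.inl ⟨q, a1, by omega, by omega⟩
    · have a3' : (g (q+1) : ℤ) - (g q : ℤ) = -(w:ℤ) := a3
      exact Or.inr ⟨q, a1, by omega, by omega⟩

  -- position of the adjacent pair (N,1) in g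
  have hjex : ∃ j, 1 ≤ j ∧ j + 1 ≤ n ∧ g j = n ∧ g (j+1) = 1 := by
    rcases rowN (n-1) (by omega) (by omega) with ⟨q, a1, a2, a3⟩ | ⟨q, a1, a2, a3⟩
    · have m1 := hfM q (by omega) (by omega)
      have m2 := hfM (q+1) (by omega) (by omega)
      have e1 : q = b + 1 := hfI q (b+1) (by omega) (by omega) (by omega) (by omega) (by omega)
      have e2 : q + 1 = b := hfI (q+1) b (by omega) (by omega) (by omega) (by omega) (by omega)
      omega
    · have m1 := hgM q (by omega) (by omega)
      have m2 := hgM (q+1) (by omega) (by omega)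
      exact ⟨q, a1, a2, by omega, by omega⟩
  obtain ⟨j, hj1, hj2, hgj, hgj1⟩ := hjex
  -- row-2 surjectivity
  have hrow2 := row_surj (n-2) (fun q => (f (q+2) : ℤ) - f q) (fun q => (g (q+2) : ℤ) - g q)
    (by
      intro q h1 h2
      have m1 := hfM q (by omega) (by omega)
      have m2 := hfM (q+2) (by omega) (by omega)
      have hne : f (q+2) ≠ f q := fun he => by
        have := hfI (q+2) q (by omega) (by omega) (by omega) (by omega) he; omega
      have hx1 : ¬ (f q = 1 ∧ f (q+2) = n) := by
        rintro ⟨u1, u2⟩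
        have e1 : q = b := hfI q b (by omega) (by omega) (by omega) (by omega) (by omega)
        have e2 : q + 2 = b + 1 := hfI (q+2) (b+1) (by omega) (by omega) (by omega) (by omega) (by omega)
        omega
      have hx2 : ¬ (f q = n ∧ f (q+2) = 1) := by
        rintro ⟨u1, u2⟩
        have e1 : q = b + 1 := hfI q (b+1) (by omega) (by omega) (by omega) (by omega) (by omega)
        have e2 : q + 2 = b := hfI (q+2) b (by omega) (by omega) (by omega) (by omega) (by omega)
        omega
      refine ⟨?_, ?_, ?_⟩ <;> push_cast <;> omega)
    (by
      intro q h1 h2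
      have m1 := hgM q (by omega) (by omega)
      have m2 := hgM (q+2) (by omega) (by omega)
      have hne : g (q+2) ≠ g q := fun he => by
        have := hgI (q+2) q (by omega) (by omega) (by omega) (by omega) he; omega
      have hx1 : ¬ (g q = 1 ∧ g (q+2) = n) := by
        rintro ⟨u1, u2⟩
        have e1 : q = j + 1 := hgI q (j+1) (by omega) (by omega) (by omega) (by omega) (by omega)
        have e2 : q + 2 = j := hgI (q+2) j (by omega) (by omega) (by omega) (by omega) (by omega)
        omega
      have hx2 : ¬ (g q = n ∧ g (q+2) = 1) := by
        rintro ⟨u1, u2⟩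
        have e1 : q = j := hgI q j (by omega) (by omega) (by omega) (by omega) (by omega)
        have e2 : q + 2 = j + 1 := hgI (q+2) (j+1) (by omega) (by omega) (by omega) (by omega) (by omega)
        omega
      refine ⟨?_, ?_, ?_⟩ <;> push_cast <;> omega)
    (by
      intro q r h1 h2 h3 h4 he
      rcases hCf q (q+2) r (r+2) (by omega) (by omega) (by omega) (by omega) (by omega)
        (by omega) (by omega) (by omega) (by omega) (by omega) with h | h
      · omega
      · exact h)
    (by
      intro q r h1 h2 h3 h4 he
      rcases hCg q (q+2) r (r+2) (by omega) (by omega) (by omega) (by omega) (by omega)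
        (by omega) (by omega) (by omega) (by omega) (by omega) with h | h
      · omega
      · exact h)
    (by
      intro q r h1 h2 h3 h4 he
      have := hH q (q+2) r (r+2) (by omega) (by omega) (by omega) (by omega) (by omega)
        (by omega) (by omega) (by omega) (by omega) (by omega)
      omega)
  have row2P : ∀ w : ℕ, 1 ≤ w → w + 2 ≤ n →
      (∃ q, 1 ≤ q ∧ q + 2 ≤ n ∧ f (q+2) = f q + w) ∨
      (∃ q, 1 ≤ q ∧ q + 2 ≤ n ∧ g (q+2) = g q + w) := by
    intro w h1 h2
    rcases hrow2 (w:ℤ) (by push_cast; omega) (by push_cast; omega) (by push_cast; omega) with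
      ⟨q, a1, a2, a3⟩ | ⟨q, a1, a2, a3⟩
    · have a3' : (f (q+2) : ℤ) - (f q : ℤ) = (w:ℤ) := a3
      exact Or.inl ⟨q, a1, by omega, by omega⟩
    · have a3' : (g (q+2) : ℤ) - (g q : ℤ) = (w:ℤ) := a3
      exact Or.inr ⟨q, a1, by omega, by omega⟩
  have row2N : ∀ w : ℕ, 1 ≤ w → w + 2 ≤ n →
      (∃ q, 1 ≤ q ∧ q + 2 ≤ n ∧ f q = f (q+2) + w) ∨
      (∃ q, 1 ≤ q ∧ q + 2 ≤ n ∧ g q = g (q+2) + w) := by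
    intro w h1 h2
    rcases hrow2 (-(w:ℤ)) (by push_cast; omega) (by push_cast; omega) (by push_cast; omega) with
      ⟨q, a1, a2, a3⟩ | ⟨q, a1, a2, a3⟩
    · have a3' : (f (q+2) : ℤ) - (f q : ℤ) = -(w:ℤ) := a3
      exact Or.inl ⟨q, a1, by omega, by omega⟩
    · have a3' : (g (q+2) : ℤ) - (g q : ℤ) = -(w:ℤ) := a3
      exact Or.inr ⟨q, a1, by omega, by omega⟩
  clear hrow1 hrow2
  -- step s0': the difference -(n-2) must be in f ; F-branching
  have hFbr : (b + 2 ≤ n ∧ f (b+2) = 2) ∨ (∃ p, 1 ≤ p ∧ p + 1 = b ∧ f p = n - 1) := by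
    rcases rowN (n-2) (by omega) (by omega) with ⟨q, a1, a2, a3⟩ | ⟨q, a1, a2, a3⟩
    · have m1 := hfM q (by omega) (by omega)
      have m2 := hfM (q+1) (by omega) (by omega)
      rcases (by omega : f (q+1) = 1 ∨ f (q+1) = 2) with h | h
      · have e1 : q + 1 = b := hfI (q+1) b (by omega) (by omega) (by omega) (by omega) (by omega)
        exact Or.inr ⟨q, a1, e1, by omega⟩
      · have e1 : q = b + 1 := hfI q (b+1) (by omega) (by omega) (by omega) (by omega) (by omega)
        have v2 : f (q+1) = f (b+2) := congrArg f (by omega)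
        exact Or.inl ⟨by omega, by omega⟩
    · have m1 := hgM q (by omega) (by omega)
      have m2 := hgM (q+1) (by omega) (by omega)
      rcases (by omega : g (q+1) = 1 ∨ g (q+1) = 2) with h | h
      · have e1 : q + 1 = j + 1 := hgI (q+1) (j+1) (by omega) (by omega) (by omega) (by omega) (by omega)
        have v1 : g q = g j := congrArg g (by omega)
        omega
      · have e1 : q = j := hgI q j (by omega) (by omega) (by omega) (by omega) (by omega)
        have v2 : g (q+1) = g (j+1) := congrArg g (by omega)
        omega
  -- step s1': the difference +(n-2) must be in g ; G-branching
  have hGbr : (j + 2 ≤ n ∧ g (j+2) = n - 1) ∨ (∃ e, 1 ≤ e ∧ e + 1 = j ∧ g e = 2) := by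
    rcases rowP (n-2) (by omega) (by omega) with ⟨q, a1, a2, a3⟩ | ⟨q, a1, a2, a3⟩
    · have m1 := hfM q (by omega) (by omega)
      have m2 := hfM (q+1) (by omega) (by omega)
      rcases (by omega : f q = 1 ∨ f q = 2) with h | h
      · have e1 : q = b := hfI q b (by omega) (by omega) (by omega) (by omega) (by omega)
        have v2 : f (q+1) = f (b+1) := congrArg f (by omega)
        omega
      · have e1 : q + 1 = b + 1 := hfI (q+1) (b+1) (by omega) (by omega) (by omega) (by omega) (by omega)
        have v1 : f q = f b := congrArg f (by omega)
        omega
    · have m1 := hgM q (by omega) (by omega)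
      have m2 := hgM (q+1) (by omega) (by omega)
      rcases (by omega : g q = 1 ∨ g q = 2) with h | h
      · have e1 : q = j + 1 := hgI q (j+1) (by omega) (by omega) (by omega) (by omega) (by omega)
        have v2 : g (q+1) = g (j+2) := congrArg g (by omega)
        exact Or.inl ⟨by omega, by omega⟩
      · have e1 : q + 1 = j := hgI (q+1) j (by omega) (by omega) (by omega) (by omega) (by omega)
        exact Or.inr ⟨q, a1, e1, by omega⟩
  -- unified (2,+1) vector of f and derived g-exclusion
  have hV2f : ∃ r, 1 ≤ r ∧ r + 2 ≤ n ∧ f (r+2) = f r + 1 := by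
    rcases hFbr with ⟨u1, u2⟩ | ⟨p, p1, p2, p3⟩
    · exact ⟨b, hb1, u1, by omega⟩
    · refine ⟨p, p1, by omega, ?_⟩
      have v : f (p+2) = f (b+1) := congrArg f (by omega)
      omega
  have hnog : ∀ s, 1 ≤ s → s + 2 ≤ n → g (s+2) ≠ g s + 1 := by
    obtain ⟨r, r1, r2, r3⟩ := hV2f
    intro s s1 s2 heq
    have := hH r (r+2) s (s+2) (by omega) (by omega) (by omega) (by omega) (by omega)
      (by omega) (by omega) (by omega) (by omega) (by omega)
    omega
  -- unified (2,-1) vector of g and derived f-exclusion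
  have hV2g : ∃ r, 1 ≤ r ∧ r + 2 ≤ n ∧ g r = g (r+2) + 1 := by
    rcases hGbr with ⟨u1, u2⟩ | ⟨e, e1, e2, e3⟩
    · exact ⟨j, hj1, u1, by omega⟩
    · refine ⟨e, e1, by omega, ?_⟩
      have v : g (e+2) = g (j+1) := congrArg g (by omega)
      omega
  have hnof : ∀ s, 1 ≤ s → s + 2 ≤ n → f s ≠ f (s+2) + 1 := by
    obtain ⟨r, r1, r2, r3⟩ := hV2g
    intro s s1 s2 heq
    have := hH s (s+2) r (r+2) (by omega) (by omega) (by omega) (by omega) (by omega)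
      (by omega) (by omega) (by omega) (by omega) (by omega)
    omega
  -- step s2: the difference -(n-3) must be in f ; extend F-blocks
  have hFbr2 : (b + 2 ≤ n ∧ f (b+2) = 2 ∧ ∃ c, 1 ≤ c ∧ c + 1 = b ∧ f c = n - 2) ∨
      (∃ p, 1 ≤ p ∧ p + 1 = b ∧ f p = n - 1 ∧ b + 2 ≤ n ∧ f (b+2) = 3) := by
    rcases rowN (n-3) (by omega) (by omega) with ⟨q, a1, a2, a3⟩ | ⟨q, a1, a2, a3⟩
    · have m1 := hfM q (by omega) (by omega)
      have m2 := hfM (q+1) (by omega) (by omega)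
      rcases hFbr with ⟨u1, u2⟩ | ⟨p, p1, p2, p3⟩
      · rcases (by omega : f (q+1) = 1 ∨ f (q+1) = 2 ∨ f (q+1) = 3) with h | h | h
        · have e1 : q + 1 = b := hfI (q+1) b (by omega) (by omega) (by omega) (by omega) (by omega)
          exact Or.inl ⟨u1, u2, q, a1, e1, by omega⟩
        · have e1 : q + 1 = b + 2 := hfI (q+1) (b+2) (by omega) (by omega) (by omega) (by omega) (by omega)
          have v1 : f q = f (b+1) := congrArg f (by omega)
          omega
        · have e1 : q = b + 1 := hfI q (b+1) (by omega) (by omega) (by omega) (by omega) (by omega)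
          have v2 : f (q+1) = f (b+2) := congrArg f (by omega)
          omega
      · rcases (by omega : f (q+1) = 1 ∨ f (q+1) = 2 ∨ f (q+1) = 3) with h | h | h
        · have e1 : q + 1 = b := hfI (q+1) b (by omega) (by omega) (by omega) (by omega) (by omega)
          have v1 : f q = f p := congrArg f (by omega)
          omega
        · have e1 : q = p := hfI q p (by omega) (by omega) (by omega) (by omega) (by omega)
          have v2 : f (q+1) = f b := congrArg f (by omega)
          omega
        · have e1 : q = b + 1 := hfI q (b+1) (by omega) (by omega) (by omega) (by omega) (by omega)
          have v2 : f (q+1) = f (b+2) := congrArg f (by omega)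
          exact Or.inr ⟨p, p1, p2, p3, by omega, by omega⟩
    · have m1 := hgM q (by omega) (by omega)
      have m2 := hgM (q+1) (by omega) (by omega)
      rcases (by omega : g (q+1) = 1 ∨ g (q+1) = 2 ∨ g (q+1) = 3) with h | h | h
      · have e1 : q + 1 = j + 1 := hgI (q+1) (j+1) (by omega) (by omega) (by omega) (by omega) (by omega)
        have v1 : g q = g j := congrArg g (by omega)
        omega
      · rcases hGbr with ⟨u1, u2⟩ | ⟨e, ee1, ee2, ee3⟩
        · have e1 : q = j + 2 := hgI q (j+2) (by omega) (by omega) (by omega) (by omega) (by omega)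
          have v2 : g (q+1) = g (j+1+2) := congrArg g (by omega)
          exact absurd (show g (j+1+2) = g (j+1) + 1 by omega) (hnog (j+1) (by omega) (by omega))
        · have e1 : q + 1 = e := hgI (q+1) e (by omega) (by omega) (by omega) (by omega) (by omega)
          have v2 : g (q+2) = g j := congrArg g (by omega)
          exact absurd (show g (q+2) = g q + 1 by omega) (hnog q (by omega) (by omega))
      · have e1 : q = j := hgI q j (by omega) (by omega) (by omega) (by omega) (by omega)
        have v2 : g (q+1) = g (j+1) := congrArg g (by omega)
        omega
  clear hFbr
  -- n = 4 is impossible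
  by_cases hn4 : n = 4
  · rcases hFbr2 with ⟨u1, u2, c, c1, c2, c3⟩ | ⟨p, p1, p2, p3, p4, p5⟩
    · have e1 : c = b + 2 := hfI c (b+2) (by omega) (by omega) (by omega) (by omega) (by omega)
      omega
    · have e1 : p = b + 2 := hfI p (b+2) (by omega) (by omega) (by omega) (by omega) (by omega)
      omega
  have hn5 : 5 ≤ n := by omega
  -- step s3: the difference +(n-3) must be in g ; extend G-blocks
  have hGbr2 : (j + 2 ≤ n ∧ g (j+2) = n - 1 ∧ ∃ e3, 1 ≤ e3 ∧ e3 + 1 = j ∧ g e3 = 3) ∨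
      (∃ e, 1 ≤ e ∧ e + 1 = j ∧ g e = 2 ∧ j + 2 ≤ n ∧ g (j+2) = n - 2) := by
    rcases rowP (n-3) (by omega) (by omega) with ⟨q, a1, a2, a3⟩ | ⟨q, a1, a2, a3⟩
    · have m1 := hfM q (by omega) (by omega)
      have m2 := hfM (q+1) (by omega) (by omega)
      rcases (by omega : f q = 1 ∨ f q = 2 ∨ f q = 3) with h | h | h
      · have e1 : q = b := hfI q b (by omega) (by omega) (by omega) (by omega) (by omega)
        have v2 : f (q+1) = f (b+1) := congrArg f (by omega)
        omega
      · rcases hFbr2 with ⟨u1, u2, c, c1, c2, c3⟩ | ⟨p, p1, p2, p3, p4, p5⟩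
        · have e1 : q = b + 2 := hfI q (b+2) (by omega) (by omega) (by omega) (by omega) (by omega)
          have v2 : f (q+1) = f (b+1+2) := congrArg f (by omega)
          exact absurd (show f (b+1) = f (b+1+2) + 1 by omega) (hnof (b+1) (by omega) (by omega))
        · have e1 : q + 1 = p := hfI (q+1) p (by omega) (by omega) (by omega) (by omega) (by omega)
          have v2 : f (q+2) = f b := congrArg f (by omega)
          exact absurd (show f q = f (q+2) + 1 by omega) (hnof q (by omega) (by omega))
      · have e1 : q + 1 = b + 1 := hfI (q+1) (b+1) (by omega) (by omega) (by omega) (by omega) (by omega)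
        have v1 : f q = f b := congrArg f (by omega)
        omega
    · have m1 := hgM q (by omega) (by omega)
      have m2 := hgM (q+1) (by omega) (by omega)
      rcases hGbr with ⟨u1, u2⟩ | ⟨e, ee1, ee2, ee3⟩
      · rcases (by omega : g q = 1 ∨ g q = 2 ∨ g q = 3) with h | h | h
        · have e1 : q = j + 1 := hgI q (j+1) (by omega) (by omega) (by omega) (by omega) (by omega)
          have v2 : g (q+1) = g (j+2) := congrArg g (by omega)
          omega
        · have e1 : q + 1 = j + 2 := hgI (q+1) (j+2) (by omega) (by omega) (by omega) (by omega) (by omega)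
          have v1 : g q = g (j+1) := congrArg g (by omega)
          omega
        · have e1 : q + 1 = j := hgI (q+1) j (by omega) (by omega) (by omega) (by omega) (by omega)
          exact Or.inl ⟨u1, u2, q, a1, e1, by omega⟩
      · rcases (by omega : g q = 1 ∨ g q = 2 ∨ g q = 3) with h | h | h
        · have e1 : q = j + 1 := hgI q (j+1) (by omega) (by omega) (by omega) (by omega) (by omega)
          have v2 : g (q+1) = g (j+2) := congrArg g (by omega)
          exact Or.inr ⟨e, ee1, ee2, ee3, by omega, by omega⟩
        · have e1 : q = e := hgI q e (by omega) (by omega) (by omega) (by omega) (by omega)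
          have v2 : g (q+1) = g j := congrArg g (by omega)
          omega
        · have e1 : q + 1 = j := hgI (q+1) j (by omega) (by omega) (by omega) (by omega) (by omega)
          have v1 : g q = g e := congrArg g (by omega)
          omega
  clear hGbr
  -- n = 5 is impossible
  by_cases hn5' : n = 5
  · have hG3 : ∃ r, 1 ≤ r ∧ r + 3 ≤ n ∧ g (r+3) = g r + 1 := by
      rcases hGbr2 with ⟨u1, u2, e3, t1, t2, t3⟩ | ⟨e, t1, t2, t3, u1, u2⟩
      · refine ⟨e3, t1, by omega, ?_⟩
        have v : g (e3+3) = g (j+2) := congrArg g (by omega)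
        omega
      · refine ⟨e, t1, by omega, ?_⟩
        have v : g (e+3) = g (j+2) := congrArg g (by omega)
        omega
    have hnoF3 : ∀ s, 1 ≤ s → s + 3 ≤ n → f (s+3) ≠ f s + 1 := by
      obtain ⟨r, r1, r2, r3⟩ := hG3
      intro s s1 s2 heq
      have := hH s (s+3) r (r+3) (by omega) (by omega) (by omega) (by omega) (by omega)
        (by omega) (by omega) (by omega) (by omega) (by omega)
      omega
    rcases row2N (n-2) (by omega) (by omega) with ⟨q, a1, a2, a3⟩ | ⟨q, a1, a2, a3⟩
    · have m1 := hfM q (by omega) (by omega)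
      have m2 := hfM (q+2) (by omega) (by omega)
      rcases (by omega : f (q+2) = 1 ∨ f (q+2) = 2) with h | h
      · have e2 : q + 2 = b := hfI (q+2) b (by omega) (by omega) (by omega) (by omega) (by omega)
        rcases hFbr2 with ⟨u1, u2, c, c1, c2, c3⟩ | ⟨p, p1, p2, p3, p4, p5⟩
        · have v : f (q+3) = f (b+1) := congrArg f (by omega)
          exact hnoF3 q (by omega) (by omega) (by omega)
        · have e1 : q = p := hfI q p (by omega) (by omega) (by omega) (by omega) (by omega)
          omega
      · have e1 : q = b + 1 := hfI q (b+1) (by omega) (by omega) (by omega) (by omega) (by omega)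
        rcases hFbr2 with ⟨u1, u2, c, c1, c2, c3⟩ | ⟨p, p1, p2, p3, p4, p5⟩
        · have e2 : q + 2 = b + 2 := hfI (q+2) (b+2) (by omega) (by omega) (by omega) (by omega) (by omega)
          omega
        · have v : f (q+2) = f (b+3) := congrArg f (by omega)
          exact hnoF3 b (by omega) (by omega) (by omega)
    · have m1 := hgM q (by omega) (by omega)
      have m2 := hgM (q+2) (by omega) (by omega)
      rcases (by omega : g (q+2) = 1 ∨ g (q+2) = 2) with h | h
      · have e2 : q + 2 = j + 1 := hgI (q+2) (j+1) (by omega) (by omega) (by omega) (by omega) (by omega)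
        rcases hGbr2 with ⟨u1, u2, e3, t1, t2, t3⟩ | ⟨e, t1, t2, t3, u1, u2⟩
        · have e1 : q = j + 2 := hgI q (j+2) (by omega) (by omega) (by omega) (by omega) (by omega)
          omega
        · have v1 : g q = g e := congrArg g (by omega)
          omega
      · have e1 : q = j := hgI q j (by omega) (by omega) (by omega) (by omega) (by omega)
        rcases hGbr2 with ⟨u1, u2, e3, t1, t2, t3⟩ | ⟨e, t1, t2, t3, u1, u2⟩
        · have v : g (q+2) = g (j+2) := congrArg g (by omega)
          omega
        · have v : g (q+2) = g (j+2) := congrArg g (by omega)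
          omega
  have h6 : 6 ≤ n := by omega
  -- step s4: the distance-2 difference -(n-2) must be in f ; extend F-blocks
  have hFbr3 : (b + 2 ≤ n ∧ f (b+2) = 2 ∧ (∃ c, 1 ≤ c ∧ c + 1 = b ∧ f c = n - 2) ∧
        ∃ d, 1 ≤ d ∧ d + 2 = b ∧ f d = n - 1) ∨
      (∃ p, 1 ≤ p ∧ p + 1 = b ∧ f p = n - 1 ∧ b + 2 ≤ n ∧ f (b+2) = 3 ∧
        b + 3 ≤ n ∧ f (b+3) = 2) := by
    rcases row2N (n-2) (by omega) (by omega) with ⟨q, a1, a2, a3⟩ | ⟨q, a1, a2, a3⟩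
    · have m1 := hfM q (by omega) (by omega)
      have m2 := hfM (q+2) (by omega) (by omega)
      rcases (by omega : f (q+2) = 1 ∨ f (q+2) = 2) with h | h
      · have e2 : q + 2 = b := hfI (q+2) b (by omega) (by omega) (by omega) (by omega) (by omega)
        rcases hFbr2 with ⟨u1, u2, c, c1, c2, c3⟩ | ⟨p, p1, p2, p3, p4, p5⟩
        · exact Or.inl ⟨u1, u2, ⟨c, c1, c2, c3⟩, q, a1, e2, by omega⟩
        · have e1 : q = p := hfI q p (by omega) (by omega) (by omega) (by omega) (by omega)
          omega
      · have e1 : q = b + 1 := hfI q (b+1) (by omega) (by omega) (by omega) (by omega) (by omega)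
        rcases hFbr2 with ⟨u1, u2, c, c1, c2, c3⟩ | ⟨p, p1, p2, p3, p4, p5⟩
        · have e2 : q + 2 = b + 2 := hfI (q+2) (b+2) (by omega) (by omega) (by omega) (by omega) (by omega)
          omega
        · have v : f (q+2) = f (b+3) := congrArg f (by omega)
          exact Or.inr ⟨p, p1, p2, p3, p4, p5, by omega, by omega⟩
    · have m1 := hgM q (by omega) (by omega)
      have m2 := hgM (q+2) (by omega) (by omega)
      rcases (by omega : g (q+2) = 1 ∨ g (q+2) = 2) with h | h
      · have e2 : q + 2 = j + 1 := hgI (q+2) (j+1) (by omega) (by omega) (by omega) (by omega) (by omega)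
        rcases hGbr2 with ⟨u1, u2, e3, t1, t2, t3⟩ | ⟨e, t1, t2, t3, u1, u2⟩
        · have e1 : q = j + 2 := hgI q (j+2) (by omega) (by omega) (by omega) (by omega) (by omega)
          omega
        · have v1 : g q = g e := congrArg g (by omega)
          omega
      · have e1 : q = j := hgI q j (by omega) (by omega) (by omega) (by omega) (by omega)
        rcases hGbr2 with ⟨u1, u2, e3, t1, t2, t3⟩ | ⟨e, t1, t2, t3, u1, u2⟩
        · have v : g (q+2) = g (j+2) := congrArg g (by omega)
          omega
        · have v : g (q+2) = g (j+2) := congrArg g (by omega)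
          omega
  clear hFbr2
  -- step s5: the distance-2 difference +(n-2) must be in g ; extend G-blocks
  have hGbr3 : (j + 2 ≤ n ∧ g (j+2) = n - 1 ∧ (∃ e3, 1 ≤ e3 ∧ e3 + 1 = j ∧ g e3 = 3) ∧
        ∃ e5, 1 ≤ e5 ∧ e5 + 2 = j ∧ g e5 = 2) ∨
      (∃ e, 1 ≤ e ∧ e + 1 = j ∧ g e = 2 ∧ j + 2 ≤ n ∧ g (j+2) = n - 2 ∧
        j + 3 ≤ n ∧ g (j+3) = n - 1) := by
    rcases row2P (n-2) (by omega) (by omega) with ⟨q, a1, a2, a3⟩ | ⟨q, a1, a2, a3⟩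
    · have m1 := hfM q (by omega) (by omega)
      have m2 := hfM (q+2) (by omega) (by omega)
      rcases (by omega : f q = 1 ∨ f q = 2) with h | h
      · have e1 : q = b := hfI q b (by omega) (by omega) (by omega) (by omega) (by omega)
        have v : f (q+2) = f (b+2) := congrArg f (by omega)
        rcases hFbr3 with ⟨u1, u2, hc, hd⟩ | ⟨p, p1, p2, p3, p4, p5, p6, p7⟩
        · omega
        · omega
      · have e2 : q + 2 = b + 1 := hfI (q+2) (b+1) (by omega) (by omega) (by omega) (by omega) (by omega)
        rcases hFbr3 with ⟨u1, u2, hc, hd⟩ | ⟨p, p1, p2, p3, p4, p5, p6, p7⟩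
        · have e1 : q = b + 2 := hfI q (b+2) (by omega) (by omega) (by omega) (by omega) (by omega)
          omega
        · have v1 : f q = f p := congrArg f (by omega)
          omega
    · have m1 := hgM q (by omega) (by omega)
      have m2 := hgM (q+2) (by omega) (by omega)
      rcases (by omega : g q = 1 ∨ g q = 2) with h | h
      · have e1 : q = j + 1 := hgI q (j+1) (by omega) (by omega) (by omega) (by omega) (by omega)
        rcases hGbr2 with ⟨u1, u2, e3, t1, t2, t3⟩ | ⟨e, t1, t2, t3, u1, u2⟩
        · have e2 : q + 2 = j + 2 := hgI (q+2) (j+2) (by omega) (by omega) (by omega) (by omega) (by omega)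
          omega
        · have v : g (q+2) = g (j+3) := congrArg g (by omega)
          exact Or.inr ⟨e, t1, t2, t3, u1, u2, by omega, by omega⟩
      · have e2 : q + 2 = j := hgI (q+2) j (by omega) (by omega) (by omega) (by omega) (by omega)
        rcases hGbr2 with ⟨u1, u2, e3, t1, t2, t3⟩ | ⟨e, t1, t2, t3, u1, u2⟩
        · exact Or.inl ⟨u1, u2, ⟨e3, t1, t2, t3⟩, q, a1, e2, by omega⟩
        · have e1 : q = e := hgI q e (by omega) (by omega) (by omega) (by omega) (by omega)
          omega
  clear hGbr2
  -- final step s6: the difference +(n-4) has no home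
  have hG4 : ∃ r, 1 ≤ r ∧ r + 4 ≤ n ∧ g (r+4) = g r + (n-3) := by
    rcases hGbr3 with ⟨u1, u2, he3, e5, s1, s2, s3⟩ | ⟨e, t1, t2, t3, u1, u2, u3, u4⟩
    · refine ⟨e5, s1, by omega, ?_⟩
      have v : g (e5+4) = g (j+2) := congrArg g (by omega)
      omega
    · refine ⟨e, t1, by omega, ?_⟩
      have v : g (e+4) = g (j+3) := congrArg g (by omega)
      omega
  have hnoF4 : ∀ s, 1 ≤ s → s + 4 ≤ n → f (s+4) ≠ f s + (n-3) := by
    obtain ⟨r, r1, r2, r3⟩ := hG4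
    intro s s1 s2 heq
    have := hH s (s+4) r (r+4) (by omega) (by omega) (by omega) (by omega) (by omega)
      (by omega) (by omega) (by omega) (by omega) (by omega)
    omega
  rcases rowP (n-4) (by omega) (by omega) with ⟨q, a1, a2, a3⟩ | ⟨q, a1, a2, a3⟩
  · have m1 := hfM q (by omega) (by omega)
    have m2 := hfM (q+1) (by omega) (by omega)
    rcases hFbr3 with ⟨u1, u2, ⟨c, c1, c2, c3⟩, d, d1, d2, d3⟩ | ⟨p, p1, p2, p3, p4, p5, p6, p7⟩
    · rcases (by omega : f q = 1 ∨ f q = 2 ∨ f q = 3 ∨ f q = 4) with h | h | h | h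
      · have e1 : q = b := hfI q b (by omega) (by omega) (by omega) (by omega) (by omega)
        have v : f (q+1) = f (b+1) := congrArg f (by omega)
        omega
      · have e1 : q = b + 2 := hfI q (b+2) (by omega) (by omega) (by omega) (by omega) (by omega)
        have v : f (q+1) = f (b+3) := congrArg f (by omega)
        have e2 : q + 1 = c := hfI (q+1) c (by omega) (by omega) (by omega) (by omega) (by omega)
        omega
      · have e2 : q + 1 = d := hfI (q+1) d (by omega) (by omega) (by omega) (by omega) (by omega)
        have v : f (q+4) = f (b+1) := congrArg f (by omega)
        exact hnoF4 q (by omega) (by omega) (by omega)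
      · have e1 : q + 1 = b + 1 := hfI (q+1) (b+1) (by omega) (by omega) (by omega) (by omega) (by omega)
        have v : f q = f b := congrArg f (by omega)
        omega
    · rcases (by omega : f q = 1 ∨ f q = 2 ∨ f q = 3 ∨ f q = 4) with h | h | h | h
      · have e1 : q = b := hfI q b (by omega) (by omega) (by omega) (by omega) (by omega)
        have v : f (q+1) = f (b+1) := congrArg f (by omega)
        omega
      · have e1 : q = b + 3 := hfI q (b+3) (by omega) (by omega) (by omega) (by omega) (by omega)
        have v : f (q+1) = f (b+4) := congrArg f (by omega)
        exact hnoF4 b (by omega) (by omega) (by omega)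
      · have e1 : q = b + 2 := hfI q (b+2) (by omega) (by omega) (by omega) (by omega) (by omega)
        have v : f (q+1) = f (b+3) := congrArg f (by omega)
        omega
      · have e1 : q + 1 = b + 1 := hfI (q+1) (b+1) (by omega) (by omega) (by omega) (by omega) (by omega)
        have v : f q = f b := congrArg f (by omega)
        omega
  · have m1 := hgM q (by omega) (by omega)
    have m2 := hgM (q+1) (by omega) (by omega)
    rcases hGbr3 with ⟨u1, u2, ⟨e3, t1, t2, t3⟩, e5, s1, s2, s3⟩ | ⟨e, t1, t2, t3, u1, u2, u3, u4⟩
    · rcases (by omega : g q = 1 ∨ g q = 2 ∨ g q = 3 ∨ g q = 4) with h | h | h | h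
      · have e1 : q = j + 1 := hgI q (j+1) (by omega) (by omega) (by omega) (by omega) (by omega)
        have v : g (q+1) = g (j+2) := congrArg g (by omega)
        omega
      · have e1 : q = e5 := hgI q e5 (by omega) (by omega) (by omega) (by omega) (by omega)
        have v : g (q+1) = g e3 := congrArg g (by omega)
        omega
      · have e1 : q = e3 := hgI q e3 (by omega) (by omega) (by omega) (by omega) (by omega)
        have v : g (q+1) = g j := congrArg g (by omega)
        omega
      · have e1 : q + 1 = j := hgI (q+1) j (by omega) (by omega) (by omega) (by omega) (by omega)
        have v : g q = g e3 := congrArg g (by omega)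
        omega
    · rcases (by omega : g q = 1 ∨ g q = 2 ∨ g q = 3 ∨ g q = 4) with h | h | h | h
      · have e1 : q = j + 1 := hgI q (j+1) (by omega) (by omega) (by omega) (by omega) (by omega)
        have v : g (q+1) = g (j+2) := congrArg g (by omega)
        omega
      · have e1 : q = e := hgI q e (by omega) (by omega) (by omega) (by omega) (by omega)
        have v : g (q+1) = g j := congrArg g (by omega)
        omega
      · have e2 : q + 1 = j + 3 := hgI (q+1) (j+3) (by omega) (by omega) (by omega) (by omega) (by omega)
        have v : g q = g (j+2) := congrArg g (by omega)
        omega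
      · have e1 : q + 1 = j := hgI (q+1) j (by omega) (by omega) (by omega) (by omega) (by omega)
        have v : g q = g e := congrArg g (by omega)
        omega


/-- Freedman–Levanon: two distinct Costas arrays of order n ≥ 4 have maximal
cross-correlation at least 2. -/
theorem stmt_19 (n : ℕ) (hn : 4 ≤ n) (f g : ℕ → ℕ)
    (hf : IsCostas n f) (hg : IsCostas n g)
    (hne : ∃ i ∈ Finset.Icc 1 n, f i ≠ g i) :
    ∃ u v : ℤ, 2 ≤ crossCorr n f g u v := by
  by_contra hcon
  push_neg at hcon
  obtain ⟨hfBij, hfC⟩ := hf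
  obtain ⟨hgBij, hgC⟩ := hg
  have hfM : ∀ x, 1 ≤ x → x ≤ n → 1 ≤ f x ∧ f x ≤ n := fun x h1 h2 =>
    Set.mem_Icc.mp (hfBij.mapsTo (Set.mem_Icc.mpr ⟨h1, h2⟩))
  have hgM : ∀ x, 1 ≤ x → x ≤ n → 1 ≤ g x ∧ g x ≤ n := fun x h1 h2 =>
    Set.mem_Icc.mp (hgBij.mapsTo (Set.mem_Icc.mpr ⟨h1, h2⟩))
  have hfI : ∀ x y, 1 ≤ x → x ≤ n → 1 ≤ y → y ≤ n → f x = f y → x = y := fun x y h1 h2 h3 h4 he =>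
    hfBij.injOn (Set.mem_Icc.mpr ⟨h1, h2⟩) (Set.mem_Icc.mpr ⟨h3, h4⟩) he
  have hgI : ∀ x y, 1 ≤ x → x ≤ n → 1 ≤ y → y ≤ n → g x = g y → x = y := fun x y h1 h2 h3 h4 he =>
    hgBij.injOn (Set.mem_Icc.mpr ⟨h1, h2⟩) (Set.mem_Icc.mpr ⟨h3, h4⟩) he
  have hH : ∀ i j k l, 1 ≤ i → i ≤ n → 1 ≤ j → j ≤ n → 1 ≤ k → k ≤ n → 1 ≤ l → l ≤ n →
      j + k = i + l → f j + g k = f i + g l → i = j := by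
    intro i j k l hi1 hi2 hj1 hj2 hk1 hk2 hl1 hl2 hpos hval
    by_contra hij
    have h2 := cross_two n f g i j k l hi1 hi2 hj1 hj2 hk1 hk2 hl1 hl2 hpos hval hij
    have := hcon ((k:ℤ) - i) ((g k:ℤ) - f i)
    omega
  have hCf : ∀ i j k l, 1 ≤ i → i ≤ n → 1 ≤ j → j ≤ n → 1 ≤ k → k ≤ n → 1 ≤ l → l ≤ n →
      j + k = i + l → f j + f k = f i + f l → i = j ∨ i = k := by
    intro i j k l hi1 hi2 hj1 hj2 hk1 hk2 hl1 hl2 hpos hval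
    by_contra hc
    push_neg at hc
    have h2 := cross_two n f f i j k l hi1 hi2 hj1 hj2 hk1 hk2 hl1 hl2 hpos hval hc.1
    have hle := hfC ((k:ℤ) - i) ((f k:ℤ) - f i) (by
      intro hp
      have h1 : (k:ℤ) - i = 0 := congrArg Prod.fst hp
      exact hc.2 (by omega))
    omega
  have hCg : ∀ i j k l, 1 ≤ i → i ≤ n → 1 ≤ j → j ≤ n → 1 ≤ k → k ≤ n → 1 ≤ l → l ≤ n →
      j + k = i + l → g j + g k = g i + g l → i = j ∨ i = k := by
    intro i j k l hi1 hi2 hj1 hj2 hk1 hk2 hl1 hl2 hpos hval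
    by_contra hc
    push_neg at hc
    have h2 := cross_two n g g i j k l hi1 hi2 hj1 hj2 hk1 hk2 hl1 hl2 hpos hval hc.1
    have hle := hgC ((k:ℤ) - i) ((g k:ℤ) - g i) (by
      intro hp
      have h1 : (k:ℤ) - i = 0 := congrArg Prod.fst hp
      exact hc.2 (by omega))
    omega
  have hH' : ∀ i j k l, 1 ≤ i → i ≤ n → 1 ≤ j → j ≤ n → 1 ≤ k → k ≤ n → 1 ≤ l → l ≤ n →
      j + k = i + l → g j + f k = g i + f l → i = j := by
    intro i j k l hi1 hi2 hj1 hj2 hk1 hk2 hl1 hl2 hpos hval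
    have := hH k l i j hk1 hk2 hl1 hl2 hi1 hi2 hj1 hj2 (by omega) (by omega)
    omega
  -- locate the difference +(n-1)
  have hrow := row_surj (n-1) (fun q => (f (q+1) : ℤ) - f q) (fun q => (g (q+1) : ℤ) - g q)
    (by
      intro q h1 h2
      have m1 := hfM q (by omega) (by omega)
      have m2 := hfM (q+1) (by omega) (by omega)
      have hne' : f (q+1) ≠ f q := fun he => by
        have := hfI (q+1) q (by omega) (by omega) (by omega) (by omega) he; omega
      refine ⟨?_, ?_, ?_⟩ <;> push_cast <;> omega)
    (by
      intro q h1 h2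
      have m1 := hgM q (by omega) (by omega)
      have m2 := hgM (q+1) (by omega) (by omega)
      have hne' : g (q+1) ≠ g q := fun he => by
        have := hgI (q+1) q (by omega) (by omega) (by omega) (by omega) he; omega
      refine ⟨?_, ?_, ?_⟩ <;> push_cast <;> omega)
    (by
      intro q r h1 h2 h3 h4 he
      rcases hCf q (q+1) r (r+1) (by omega) (by omega) (by omega) (by omega) (by omega)
        (by omega) (by omega) (by omega) (by omega) (by omega) with h | h
      · omega
      · exact h)
    (by
      intro q r h1 h2 h3 h4 he
      rcases hCg q (q+1) r (r+1) (by omega) (by omega) (by omega) (by omega) (by omega)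
        (by omega) (by omega) (by omega) (by omega) (by omega) with h | h
      · omega
      · exact h)
    (by
      intro q r h1 h2 h3 h4 he
      have := hH q (q+1) r (r+1) (by omega) (by omega) (by omega) (by omega) (by omega)
        (by omega) (by omega) (by omega) (by omega) (by omega)
      omega)
    ((n:ℤ) - 1) (by omega) (by push_cast; omega) (by push_cast; omega)
  rcases hrow with ⟨q, a1, a2, a3⟩ | ⟨q, a1, a2, a3⟩
  · have a3' : (f (q+1) : ℤ) - (f q : ℤ) = (n:ℤ) - 1 := a3
    have m1 := hfM q (by omega) (by omega)
    have m2 := hfM (q+1) (by omega) (by omega)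
    exact costas_core n f g hn hfM hgM hfI hgI hCf hCg hH q (by omega) (by omega)
      (by omega) (by omega)
  · have a3' : (g (q+1) : ℤ) - (g q : ℤ) = (n:ℤ) - 1 := a3
    have m1 := hgM q (by omega) (by omega)
    have m2 := hgM (q+1) (by omega) (by omega)
    exact costas_core n g f hn hgM hfM hgI hfI hCg hCf hH' q (by omega) (by omega)
      (by omega) (by omega)
end
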